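/- arXiv:0811.1322 — 11 statements merged into one kernel-verified Lean document; each statement's English description precedes it below -/
import Mathlib

section
/- Let r ≥ 1 be an integer. If A ⊆ G \ {0} is a minimal 1-saturating set in the elementary abelian 2-group G of rank r, then either A is round or A ∪ {0} is round. -/
open Pointwise

/-- **Lemma.** Let `r ≥ 1`. If `A ⊆ G \ {0}` is a minimal 1-saturating set in
`G = Fin r → ZMod 2`, then either `A` or `A ∪ {0}` is round. -/
theorem stmt_4 (r : ℕ) (hr : 1 ≤ r) (A : Set (Fin r → ZMod 2)) (hA0 : 0 ∉ A)
    (hsat : A ∪ (A + A) = Set.univ)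
    (hmin : ∀ B : Set (Fin r → ZMod 2), B ⊂ A → B ∪ (B + B) ≠ Set.univ) :
    (∀ B : Set (Fin r → ZMod 2), B ⊂ A → B + B ≠ A + A) ∨
    (∀ B : Set (Fin r → ZMod 2), B ⊂ A ∪ {0} → B + B ≠ (A ∪ {0}) + (A ∪ {0})) := by
  have hself : ∀ x : Fin r → ZMod 2, x + x = 0 := by
    intro x; funext i
    show x i + x i = 0
    have : (2 : ZMod 2) = 0 := by decide
    calc x i + x i = 2 * x i := by ring
    _ = 0 := by rw [this]; ring
  by_cases h : ∀ B : Set (Fin r → ZMod 2), B ⊂ A ∪ {0} →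
      B + B ≠ (A ∪ {0}) + (A ∪ {0})
  · exact Or.inr h
  push_neg at h
  obtain ⟨C, hCsub, hCeq⟩ := h
  -- (A ∪ {0}) + (A ∪ {0}) = univ
  have huniv : (A ∪ {0}) + (A ∪ {0}) = Set.univ := by
    apply Set.eq_univ_of_forall
    intro x
    have hx : x ∈ A ∪ (A + A) := by rw [hsat]; trivial
    rcases hx with hx | hx
    · exact ⟨x, Or.inl hx, 0, Or.inr rfl, by simp⟩
    · obtain ⟨a, ha, b, hb, hab⟩ := hx
      exact ⟨a, Or.inl ha, b, Or.inl hb, hab⟩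
  have hCuniv : C + C = Set.univ := hCeq.trans huniv
  set C' : Set (Fin r → ZMod 2) := C \ {0} with hC'def
  have hC'A : C' ⊆ A := by
    intro x hx
    rcases hCsub.1 hx.1 with h1 | h1
    · exact h1
    · exact absurd h1 hx.2
  -- C' is nonempty (there is a nonzero element of C)
  have hne : ∃ c ∈ C, c ≠ (0 : Fin r → ZMod 2) := by
    by_contra hc
    push_neg at hc
    have hy : (fun _ => 1 : Fin r → ZMod 2) ∈ C + C := by rw [hCuniv]; trivial
    obtain ⟨a, ha, b, hb, hab⟩ := hy
    rw [hc a ha, hc b hb] at hab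
    have := congrFun hab ⟨0, hr⟩
    simp at this
  -- C' ∪ 2C' = univ
  have hC'sat : C' ∪ (C' + C') = Set.univ := by
    apply Set.eq_univ_of_forall
    intro x
    by_cases hx0 : x = 0
    · obtain ⟨c, hc, hc0⟩ := hne
      right
      exact ⟨c, ⟨hc, hc0⟩, c, ⟨hc, hc0⟩, by show c + c = x; rw [hself, hx0]⟩
    · have hx : x ∈ C + C := by rw [hCuniv]; trivial
      obtain ⟨a, ha, b, hb, hab⟩ := hx
      by_cases ha0 : a = 0
      · left
        have hb0 : b ≠ 0 := by rintro rfl; apply hx0; rw [← hab, ha0]; simp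
        have : x = b := by rw [← hab, ha0]; simp
        rw [this]; exact ⟨hb, hb0⟩
      · by_cases hb0 : b = 0
        · left
          have : x = a := by rw [← hab, hb0]; simp
          rw [this]; exact ⟨ha, ha0⟩
        · right; exact ⟨a, ⟨ha, ha0⟩, b, ⟨hb, hb0⟩, hab⟩
  -- By minimality, C' = A
  have hC'eq : C' = A := by
    by_contra hne'
    exact hmin C' ⟨hC'A, fun hAB => hne' (le_antisymm hC'A hAB)⟩ hC'sat
  -- 0 ∉ C, otherwise C = A ∪ {0} not proper
  have h0C : (0 : Fin r → ZMod 2) ∉ C := by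
    intro h0
    apply hCsub.2
    intro x hx
    rcases hx with hx | hx
    · have : x ∈ C' := hC'eq ▸ hx
      exact this.1
    · rw [hx]; exact h0
  have hCA : C = A := by
    rw [← hC'eq, hC'def, Set.diff_singleton_eq_self h0C]
  have hAuniv : A + A = Set.univ := by rw [← hCA]; exact hCuniv
  left
  intro B hB hBeq
  apply hmin B hB
  rw [hBeq, hAuniv, Set.union_univ]
end

section
/- Let r ≥ 1 be an integer, let g ∈ G be an element of the elementary abelian 2-group G of rank r, and suppose that A ⊆ G satisfies |A| ≥ 2. Then Γ(A) has a spanning star centered at g (i.e. g ∈ A and every a ∈ A \ {g} is adjacent to g in Γ(A)) if and only if A = g + (S ∪ {0}) for some sum-free set S ⊆ G. -/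
open Pointwise

/-- `urep A` is the set `D(A)` of elements of the group having exactly one representation,
up to the order of summands, as a sum of two elements of `A`. -/
def urep {G : Type*} [AddCommGroup G] (A : Set G) : Set G :=
  {d | ∃ a₁ ∈ A, ∃ a₂ ∈ A, a₁ + a₂ = d ∧
    ∀ b₁ ∈ A, ∀ b₂ ∈ A, b₁ + b₂ = d → (b₁ = a₁ ∧ b₂ = a₂) ∨ (b₁ = a₂ ∧ b₂ = a₁)}

/-- `gam A` is the unique representation graph `Γ(A)`: vertices are elements of `A`, and
distinct `a₁, a₂ ∈ A` are adjacent iff `a₁ + a₂ ∈ D(A)` (elements outside `A` are isolated). -/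
def gam {G : Type*} [AddCommGroup G] (A : Set G) : SimpleGraph G :=
  SimpleGraph.fromRel (fun x y => x ∈ A ∧ y ∈ A ∧ x + y ∈ urep A)

lemma self_add_self {r : ℕ} (x : Fin r → ZMod 2) : x + x = 0 :=
  funext fun i => CharTwo.add_self_eq_zero (x i)

lemma add_add_cancel {r : ℕ} (g x : Fin r → ZMod 2) : g + (g + x) = x := by
  rw [← add_assoc, self_add_self, zero_add]

/-- **Lemma.** Let `r ≥ 1`, `g ∈ G = Fin r → ZMod 2`, and `A ⊆ G` with `|A| ≥ 2`. Then `Γ(A)`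
has a spanning star centered at `g` iff `A = g + (S ∪ {0})` for some sum-free `S ⊆ G`. -/
theorem stmt_5 (r : ℕ) (hr : 1 ≤ r) (g : Fin r → ZMod 2) (A : Set (Fin r → ZMod 2))
    (hA : 2 ≤ A.ncard) :
    (g ∈ A ∧ ∀ a ∈ A, a ≠ g → (gam A).Adj g a) ↔
    ∃ S : Set (Fin r → ZMod 2), S ∩ (S + S) = ∅ ∧
      A = (fun x => g + x) '' (S ∪ {0}) := by
  constructor
  · rintro ⟨hg, hstar⟩
    refine ⟨(fun x => g + x) '' (A \ {g}), ?_, ?_⟩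
    · ext s
      simp only [Set.mem_inter_iff, Set.mem_empty_iff_false, iff_false, not_and]
      rintro ⟨a, ⟨ha, hag⟩, rfl⟩ hsum
      rw [Set.mem_add] at hsum
      obtain ⟨s₁, hs₁, s₂, hs₂, hsum⟩ := hsum
      obtain ⟨a₁, ⟨ha₁, ha₁g⟩, rfl⟩ := hs₁
      obtain ⟨a₂, ⟨ha₂, ha₂g⟩, rfl⟩ := hs₂
      simp only [Set.mem_singleton_iff] at hag ha₁g ha₂g
      have hd : a₁ + a₂ = g + a := by
        have hs : g + a₁ + (g + a₂) = g + a := hsum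
        calc a₁ + a₂ = g + (g + a₁) + (g + (g + a₂)) := by
              rw [add_add_cancel, add_add_cancel]
          _ = g + g + (g + a₁ + (g + a₂)) := add_add_add_comm _ _ _ _
          _ = g + a := by rw [self_add_self, zero_add, hs]
      have hadj := hstar a ha hag
      have hur : g + a ∈ urep A := by
        rw [gam, SimpleGraph.fromRel_adj] at hadj
        rcases hadj.2 with ⟨_, _, h⟩ | ⟨_, _, h⟩
        · exact h
        · rwa [add_comm] at h
      obtain ⟨b₁, hb₁, b₂, hb₂, hbsum, huniq⟩ := hur
      have h1 := huniq g hg a ha rfl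
      have h2 := huniq a₁ ha₁ a₂ ha₂ hd
      rcases h1 with ⟨e1, e2⟩ | ⟨e1, e2⟩ <;> rcases h2 with ⟨f1, f2⟩ | ⟨f1, f2⟩ <;>
        first
        | exact ha₁g (f1.trans e1.symm)
        | exact ha₂g (f2.trans e1.symm)
        | exact ha₁g (f1.trans e2.symm)
        | exact ha₂g (f2.trans e2.symm)
    · ext x
      constructor
      · intro hx
        by_cases hxg : x = g
        · exact ⟨0, Or.inr rfl, by simp [hxg]⟩
        · exact ⟨g + x, Or.inl ⟨x, ⟨hx, hxg⟩, rfl⟩, add_add_cancel g x⟩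
      · rintro ⟨t, ht | ht, rfl⟩
        · obtain ⟨a, ⟨ha, _⟩, rfl⟩ := ht
          show g + (g + a) ∈ A
          rwa [add_add_cancel]
        · simp only [Set.mem_singleton_iff] at ht
          simpa [ht] using hg
  · rintro ⟨S, hSF, rfl⟩
    have h0 : (0 : Fin r → ZMod 2) ∉ S := by
      intro h
      have : (0 : Fin r → ZMod 2) ∈ S ∩ (S + S) :=
        ⟨h, Set.mem_add.mpr ⟨0, h, 0, h, add_zero 0⟩⟩
      rw [hSF] at this; exact this
    have hgA : g ∈ (fun x => g + x) '' (S ∪ {0}) := ⟨0, Or.inr rfl, add_zero g⟩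
    refine ⟨hgA, ?_⟩
    rintro a ⟨t, ht, rfl⟩ hne
    have htS : t ∈ S := by
      rcases ht with h | h
      · exact h
      · simp only [Set.mem_singleton_iff] at h
        exact absurd (by simp [h]) hne
    have ht0 : t ≠ 0 := fun h => h0 (h ▸ htS)
    have hmem : ∀ b ∈ (fun x => g + x) '' (S ∪ {0}), ∃ u, (u ∈ S ∨ u = 0) ∧ b = g + u := by
      rintro b ⟨u, hu, rfl⟩
      exact ⟨u, (by simpa using hu : u = 0 ∨ u ∈ S).symm, rfl⟩
    rw [gam, SimpleGraph.fromRel_adj]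
    refine ⟨fun h => hne h.symm, Or.inl ⟨hgA, ⟨t, ht, rfl⟩, ?_⟩⟩
    refine ⟨g, hgA, g + t, ⟨t, ht, rfl⟩, rfl, ?_⟩
    intro b₁ hb₁ b₂ hb₂ hbsum
    obtain ⟨t₁, ht₁, rfl⟩ := hmem b₁ hb₁
    obtain ⟨t₂, ht₂, rfl⟩ := hmem b₂ hb₂
    have hbs : g + t₁ + (g + t₂) = g + (g + t) := hbsum
    have htt : t₁ + t₂ = t := by
      calc t₁ + t₂ = g + (g + t₁) + (g + (g + t₂)) := by
            rw [add_add_cancel, add_add_cancel]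
        _ = g + g + (g + t₁ + (g + t₂)) := add_add_add_comm _ _ _ _
        _ = t := by rw [self_add_self, zero_add, hbs, add_add_cancel]
    rcases ht₁ with h1 | h1
    · rcases ht₂ with h2 | h2
      · exfalso
        have : t ∈ S ∩ (S + S) := ⟨htS, Set.mem_add.mpr ⟨t₁, h1, t₂, h2, htt⟩⟩
        rw [hSF] at this; exact this
      · subst h2
        rw [add_zero] at htt
        subst htt
        exact Or.inr ⟨rfl, by rw [add_zero]⟩
    · subst h1
      rw [zero_add] at htt
      subst htt
      exact Or.inl ⟨by rw [add_zero], rfl⟩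
end

section
/- Let r ≥ 1 be an integer and suppose that A ⊆ G is a subset of the elementary abelian 2-group G of rank r. If |A| ≥ 2^(r-2) + 3, then the graph Γ(A) is triangle-free: there are no three pairwise distinct elements a₁, a₂, a₃ ∈ A that are pairwise adjacent in Γ(A). -/
open Pointwise

lemma key_mem {G : Type*} [AddCommGroup G] (htwo : ∀ x : G, x + x = 0) {A : Set G} {a b : G}
    (ha : a ∈ A) (hb : b ∈ A) (hd : a + b ∈ urep A) :
    ∀ x ∈ A, x + (a + b) ∈ A → x = a ∨ x = b := by
  obtain ⟨c₁, hc₁, c₂, hc₂, hsum, hu⟩ := hd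
  intro x hx hx'
  have hx2 : x + (x + (a + b)) = a + b := by rw [← add_assoc, htwo, zero_add]
  have h1 := hu x hx (x + (a + b)) hx' hx2
  have h2 := hu a ha b hb rfl
  rcases h1 with ⟨e, _⟩ | ⟨e, _⟩ <;> rcases h2 with ⟨f1, f2⟩ | ⟨f1, f2⟩ <;> subst e <;> tauto


/-- **Proposition (triangle-freeness).** Let `r ≥ 1` and `A ⊆ G = Fin r → ZMod 2`.
If `|A| ≥ 2^(r-2) + 3` (stated as `4·|A| ≥ 2^r + 12`), then `Γ(A)` is triangle-free. -/
theorem stmt_6 (r : ℕ) (hr : 1 ≤ r) (A : Set (Fin r → ZMod 2))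
    (hsize : 2 ^ r + 12 ≤ 4 * A.ncard) :
    ∀ a₁ a₂ a₃ : Fin r → ZMod 2, a₁ ∈ A → a₂ ∈ A → a₃ ∈ A →
      a₁ ≠ a₂ → a₂ ≠ a₃ → a₁ ≠ a₃ →
      ¬((gam A).Adj a₁ a₂ ∧ (gam A).Adj a₂ a₃ ∧ (gam A).Adj a₁ a₃) := by
  classical
  intro a₁ a₂ a₃ h1 h2 h3 h12 h23 h13 ⟨g12, g23, g13⟩
  have htwo : ∀ x : Fin r → ZMod 2, x + x = 0 := by
    intro x
    funext i
    show x i + x i = 0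
    have : ∀ y : ZMod 2, y + y = 0 := by decide
    exact this (x i)
  have hcancel : ∀ p q : Fin r → ZMod 2, p + (p + q) = q := by
    intro p q; rw [← add_assoc, htwo, zero_add]
  have hK : ∀ x d : Fin r → ZMod 2, x + d + d = x := by
    intro x d; rw [add_assoc, htwo, add_zero]
  have hcomb : ∀ p q s : Fin r → ZMod 2, (p + q) + (p + s) = q + s := by
    intro p q s; rw [add_add_add_comm, htwo, zero_add]
  simp only [gam, SimpleGraph.fromRel_adj] at g12 g23 g13
  have hd12 : a₁ + a₂ ∈ urep A := by
    rcases g12.2 with ⟨_, _, h⟩ | ⟨_, _, h⟩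
    · exact h
    · rwa [add_comm] at h
  have hd23 : a₂ + a₃ ∈ urep A := by
    rcases g23.2 with ⟨_, _, h⟩ | ⟨_, _, h⟩
    · exact h
    · rwa [add_comm] at h
  have hd13 : a₁ + a₃ ∈ urep A := by
    rcases g13.2 with ⟨_, _, h⟩ | ⟨_, _, h⟩
    · exact h
    · rwa [add_comm] at h
  have hu12 := key_mem htwo h1 h2 hd12
  have hu23 := key_mem htwo h2 h3 hd23
  have hu13 := key_mem htwo h1 h3 hd13
  set d12 := a₁ + a₂ with hd12def
  set d23 := a₂ + a₃ with hd23def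
  set d13 := a₁ + a₃ with hd13def
  set a₄ := a₃ + d12 with ha4def
  -- finset setup
  set F : Finset (Fin r → ZMod 2) := A.toFinset with hFdef
  have hmemF : ∀ x, x ∈ F ↔ x ∈ A := fun x => Set.mem_toFinset
  set F1 : Finset (Fin r → ZMod 2) := F.image (· + d12) with hF1def
  set F2 : Finset (Fin r → ZMod 2) := F.image (· + d23) with hF2def
  set F3 : Finset (Fin r → ZMod 2) := F.image (· + d13) with hF3def
  have hmemT : ∀ (d : Fin r → ZMod 2) (x), x ∈ F.image (· + d) ↔ x + d ∈ A := by
    intro d x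
    simp only [Finset.mem_image, hmemF]
    constructor
    · rintro ⟨y, hy, rfl⟩; rwa [hK]
    · intro hx; exact ⟨x + d, hx, hK x d⟩
  have hmem1 : ∀ x, x ∈ F1 ↔ x + d12 ∈ A := hmemT d12
  have hmem2 : ∀ x, x ∈ F2 ↔ x + d23 ∈ A := hmemT d23
  have hmem3 : ∀ x, x ∈ F3 ↔ x + d13 ∈ A := hmemT d13
  -- identities
  have e1213 : d12 + d13 = d23 := hcomb a₁ a₂ a₃
  have e1223 : d12 + d23 = d13 := by
    rw [hd12def, add_comm a₁ a₂, hd23def]; exact hcomb a₂ a₁ a₃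
  have e2312 : d23 + d12 = d13 := by rw [add_comm]; exact e1223
  -- intersection bounds
  have i1 : (F ∩ F1).card ≤ 2 := by
    have hsub : F ∩ F1 ⊆ {a₁, a₂} := by
      intro x hx
      rw [Finset.mem_inter, hmemF, hmem1] at hx
      have := hu12 x hx.1 hx.2
      simp only [Finset.mem_insert, Finset.mem_singleton]
      exact this
    exact (Finset.card_le_card hsub).trans ((Finset.card_insert_le _ _).trans (by simp))
  have i2 : ((F ∪ F1) ∩ F2).card ≤ 3 := by
    have hsub : (F ∪ F1) ∩ F2 ⊆ {a₂, a₃, a₄} := by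
      intro x hx
      rw [Finset.mem_inter, Finset.mem_union, hmemF, hmem1, hmem2] at hx
      simp only [Finset.mem_insert, Finset.mem_singleton]
      rcases hx.1 with hxA | hxB
      · rcases hu23 x hxA hx.2 with h | h
        · exact Or.inl h
        · exact Or.inr (Or.inl h)
      · have hy' : (x + d12) + d13 ∈ A := by
          rw [add_assoc, e1213]; exact hx.2
        rcases hu13 (x + d12) hxB hy' with h | h
        · left
          have : x = a₁ + d12 := by rw [← h, hK]
          rw [this, hd12def, hcancel]
        · right; right
          rw [ha4def, ← h, hK]
    refine (Finset.card_le_card hsub).trans ?_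
    exact (Finset.card_insert_le _ _).trans (Nat.succ_le_succ ((Finset.card_insert_le _ _).trans (by simp)))
  have i3 : ((F ∪ F1 ∪ F2) ∩ F3).card ≤ 3 := by
    have hsub : (F ∪ F1 ∪ F2) ∩ F3 ⊆ {a₁, a₃, a₄} := by
      intro x hx
      rw [Finset.mem_inter, Finset.mem_union, Finset.mem_union, hmemF, hmem1, hmem2, hmem3] at hx
      simp only [Finset.mem_insert, Finset.mem_singleton]
      rcases hx.1 with (hxA | hxB) | hxC
      · rcases hu13 x hxA hx.2 with h | h
        · exact Or.inl h
        · exact Or.inr (Or.inl h)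
      · have hy' : (x + d12) + d23 ∈ A := by
          rw [add_assoc, e1223]; exact hx.2
        rcases hu23 (x + d12) hxB hy' with h | h
        · left
          have : x = a₂ + d12 := by rw [← h, hK]
          rw [this, hd12def, add_comm a₁ a₂, hcancel]
        · right; right
          rw [ha4def, ← h, hK]
      · have hy' : (x + d23) + d12 ∈ A := by
          rw [add_assoc, e2312]; exact hx.2
        rcases hu12 (x + d23) hxC hy' with h | h
        · right; right
          have : x = a₁ + d23 := by rw [← h, hK]
          rw [this, ha4def, hd23def, hd12def]
          abel
        · right; left
          have : x = a₂ + d23 := by rw [← h, hK]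
          rw [this, hd23def, hcancel]
    refine (Finset.card_le_card hsub).trans ?_
    exact (Finset.card_insert_le _ _).trans (Nat.succ_le_succ ((Finset.card_insert_le _ _).trans (by simp)))
  -- cards of translates
  have c1 : F1.card = F.card := Finset.card_image_of_injective F (add_left_injective d12)
  have c2 : F2.card = F.card := Finset.card_image_of_injective F (add_left_injective d23)
  have c3 : F3.card = F.card := Finset.card_image_of_injective F (add_left_injective d13)
  have u1 : (F ∪ F1).card + (F ∩ F1).card = F.card + F1.card :=
    Finset.card_union_add_card_inter F F1
  have u2 : (F ∪ F1 ∪ F2).card + ((F ∪ F1) ∩ F2).card = (F ∪ F1).card + F2.card :=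
    Finset.card_union_add_card_inter (F ∪ F1) F2
  have u3 : (F ∪ F1 ∪ F2 ∪ F3).card + ((F ∪ F1 ∪ F2) ∩ F3).card = (F ∪ F1 ∪ F2).card + F3.card :=
    Finset.card_union_add_card_inter (F ∪ F1 ∪ F2) F3
  have htot : (F ∪ F1 ∪ F2 ∪ F3).card ≤ 2 ^ r := by
    have := Finset.card_le_univ (F ∪ F1 ∪ F2 ∪ F3)
    rwa [Fintype.card_fun, ZMod.card, Fintype.card_fin] at this
  have hnc : A.ncard = F.card := Set.ncard_eq_toFinset_card' A
  rw [hnc] at hsize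
  omega
end

section
/- Let r ≥ 1 be an integer and suppose that A ⊆ G is a subset of the elementary abelian 2-group G of rank r. If |A| > 2^(r-2) + 3, then the set D(A) is sum-free, i.e. D(A) ∩ (D(A) + D(A)) = ∅. -/
open Pointwise

namespace Stmt7Aux

variable {r : ℕ}

lemma char2 (x : Fin r → ZMod 2) : x + x = 0 := by
  funext i
  have h : ∀ y : ZMod 2, y + y = 0 := by decide
  exact h (x i)

lemma add_add_cancel (x y : Fin r → ZMod 2) : x + (x + y) = y := by
  rw [← add_assoc, char2, zero_add]

lemma key (A : Set (Fin r → ZMod 2)) (x : Fin r → ZMod 2) (hx : x ∈ urep A) :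
    (A ∩ ((x + ·) '' A)).ncard ≤ 2 := by
  obtain ⟨a₁, ha₁, a₂, ha₂, hsum, huniq⟩ := hx
  have hsub : A ∩ ((x + ·) '' A) ⊆ {a₁, a₂} := by
    rintro a ⟨ha, b, hb, rfl⟩
    have h : b + (x + b) = x := by
      rw [add_comm x b, ← add_assoc, char2, zero_add]
    rcases huniq b hb (x + b) ha h with ⟨h1, h2⟩ | ⟨h1, h2⟩
    · exact Or.inr h2
    · exact Or.inl h2
  calc (A ∩ ((x + ·) '' A)).ncard ≤ ({a₁, a₂} : Set _).ncard :=
        Set.ncard_le_ncard hsub (Set.toFinite _)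
    _ ≤ 2 := by
        refine le_trans (Set.ncard_insert_le _ _) ?_
        simp

lemma shiftinter (A : Set (Fin r → ZMod 2)) (x y : Fin r → ZMod 2) :
    (((x + ·) '' A) ∩ ((y + ·) '' A)).ncard = (A ∩ (((x + y) + ·) '' A)).ncard := by
  have hinj : Function.Injective ((x + ·) : (Fin r → ZMod 2) → (Fin r → ZMod 2)) :=
    add_right_injective x
  have himg : (x + ·) '' (A ∩ (((x + y) + ·) '' A)) = ((x + ·) '' A) ∩ ((y + ·) '' A) := by
    rw [Set.image_inter hinj, Set.image_image]
    have hf : (fun a => x + (x + y + a)) = (fun a : Fin r → ZMod 2 => y + a) := by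
      funext a
      rw [add_assoc x y a, add_add_cancel]
    rw [hf]
  rw [← himg, Set.ncard_image_of_injective _ hinj]

end Stmt7Aux

/-- **Proposition.** Let `r ≥ 1` and `A ⊆ G = Fin r → ZMod 2`. If `|A| > 2^(r-2) + 3`
(stated as `4·|A| > 2^r + 12`), then `D(A)` is sum-free. -/
theorem stmt_7 (r : ℕ) (hr : 1 ≤ r) (A : Set (Fin r → ZMod 2))
    (hsize : 2 ^ r + 12 < 4 * A.ncard) :
    urep A ∩ (urep A + urep A) = ∅ := by
  by_contra h
  obtain ⟨d, hdu, hds⟩ := Set.nonempty_iff_ne_empty.mpr h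
  obtain ⟨d₁, hd₁, d₂, hd₂, rfl⟩ := Set.mem_add.mp hds
  set B₂ : Set (Fin r → ZMod 2) := (d₁ + ·) '' A with hB₂
  set B₃ : Set (Fin r → ZMod 2) := (d₂ + ·) '' A with hB₃
  set B₄ : Set (Fin r → ZMod 2) := ((d₁ + d₂) + ·) '' A with hB₄
  have h12 : (A ∩ B₂).ncard ≤ 2 := Stmt7Aux.key A d₁ hd₁
  have h13 : (A ∩ B₃).ncard ≤ 2 := Stmt7Aux.key A d₂ hd₂
  have h14 : (A ∩ B₄).ncard ≤ 2 := Stmt7Aux.key A (d₁ + d₂) hdu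
  have h23 : (B₂ ∩ B₃).ncard ≤ 2 := by
    rw [hB₂, hB₃, Stmt7Aux.shiftinter]
    exact Stmt7Aux.key A (d₁ + d₂) hdu
  have h24 : (B₂ ∩ B₄).ncard ≤ 2 := by
    rw [hB₂, hB₄, Stmt7Aux.shiftinter, Stmt7Aux.add_add_cancel]
    exact Stmt7Aux.key A d₂ hd₂
  have h34 : (B₃ ∩ B₄).ncard ≤ 2 := by
    rw [hB₃, hB₄, Stmt7Aux.shiftinter]
    have : d₂ + (d₁ + d₂) = d₁ := by
      rw [add_comm d₁ d₂, Stmt7Aux.add_add_cancel]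
    rw [this]
    exact Stmt7Aux.key A d₁ hd₁
  have hc₂ : B₂.ncard = A.ncard := Set.ncard_image_of_injective _ (add_right_injective d₁)
  have hc₃ : B₃.ncard = A.ncard := Set.ncard_image_of_injective _ (add_right_injective d₂)
  have hc₄ : B₄.ncard = A.ncard := Set.ncard_image_of_injective _ (add_right_injective (d₁ + d₂))
  have e1 : (A ∪ B₂).ncard + (A ∩ B₂).ncard = A.ncard + B₂.ncard :=
    Set.ncard_union_add_ncard_inter A B₂
  have e2 : ((A ∪ B₂) ∪ B₃).ncard + ((A ∪ B₂) ∩ B₃).ncard = (A ∪ B₂).ncard + B₃.ncard :=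
    Set.ncard_union_add_ncard_inter _ B₃
  have e3 : (((A ∪ B₂) ∪ B₃) ∪ B₄).ncard + (((A ∪ B₂) ∪ B₃) ∩ B₄).ncard
      = ((A ∪ B₂) ∪ B₃).ncard + B₄.ncard :=
    Set.ncard_union_add_ncard_inter _ B₄
  have i3 : ((A ∪ B₂) ∩ B₃).ncard ≤ 4 := by
    rw [Set.union_inter_distrib_right]
    calc ((A ∩ B₃) ∪ (B₂ ∩ B₃)).ncard ≤ (A ∩ B₃).ncard + (B₂ ∩ B₃).ncard :=
          Set.ncard_union_le _ _
      _ ≤ 4 := by omega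
  have i4 : (((A ∪ B₂) ∪ B₃) ∩ B₄).ncard ≤ 6 := by
    rw [Set.union_inter_distrib_right, Set.union_inter_distrib_right]
    calc (((A ∩ B₄) ∪ (B₂ ∩ B₄)) ∪ (B₃ ∩ B₄)).ncard
        ≤ ((A ∩ B₄) ∪ (B₂ ∩ B₄)).ncard + (B₃ ∩ B₄).ncard := Set.ncard_union_le _ _
      _ ≤ ((A ∩ B₄).ncard + (B₂ ∩ B₄).ncard) + (B₃ ∩ B₄).ncard := by
          exact Nat.add_le_add_right (Set.ncard_union_le _ _) _
      _ ≤ 6 := by omega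
  have hU : (((A ∪ B₂) ∪ B₃) ∪ B₄).ncard ≤ 2 ^ r := by
    have h1 : (((A ∪ B₂) ∪ B₃) ∪ B₄).ncard ≤ (Set.univ : Set (Fin r → ZMod 2)).ncard :=
      Set.ncard_le_ncard (Set.subset_univ _) (Set.toFinite _)
    have h2 : (Set.univ : Set (Fin r → ZMod 2)).ncard = 2 ^ r := by
      rw [Set.ncard_univ, Nat.card_eq_fintype_card]
      simp
    omega
  omega
end

section
/- Let r ≥ 2 and κ ≥ 2 be integers and suppose that S ⊆ G is a sum-free subset of the elementary abelian 2-group G of rank r with |S| > 2^(r-2) + κ. Then every element c of the sumset 2S has at least κ representations c = s₁ + s₂ with s₁, s₂ ∈ S, where representations differing only in the order of the summands are counted once. -/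
open Pointwise

/-- **Corollary.** Let `r, κ ≥ 2` and let `S ⊆ G = Fin r → ZMod 2` be sum-free with
`|S| > 2^(r-2) + κ`. Then every `c ∈ 2S` has at least `κ` representations (distinct up to
the order of summands, encoded as unordered pairs in `Sym2 G`) as a sum of two elements of `S`. -/
theorem stmt_9 (r κ : ℕ) (hr : 2 ≤ r) (hκ : 2 ≤ κ) (S : Set (Fin r → ZMod 2))
    (hsf : S ∩ (S + S) = ∅) (hsize : 2 ^ (r - 2) + κ < S.ncard)
    (c : Fin r → ZMod 2) (hc : c ∈ S + S) :
    κ ≤ Set.ncard {z : Sym2 (Fin r → ZMod 2) |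
      ∃ s₁ ∈ S, ∃ s₂ ∈ S, s₁ + s₂ = c ∧ z = s(s₁, s₂)} := by
  classical
  set R : Set (Sym2 (Fin r → ZMod 2)) :=
    {z | ∃ s₁ ∈ S, ∃ s₂ ∈ S, s₁ + s₂ = c ∧ z = s(s₁, s₂)} with hRdef
  have hchar : ∀ x : Fin r → ZMod 2, x + x = 0 := by
    intro x; funext i
    have h2 : ∀ a : ZMod 2, a + a = 0 := by decide
    simpa using h2 (x i)
  have hkey : ∀ a b : Fin r → ZMod 2, a + (a + b) = b := by
    intro a b; rw [← add_assoc, hchar, zero_add]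
  have hnotSS : ∀ x ∈ S, x ∉ S + S := by
    intro x hx hx2
    have hm : x ∈ S ∩ (S + S) := ⟨hx, hx2⟩
    rw [hsf] at hm
    exact hm
  have hmemSS : ∀ a b : Fin r → ZMod 2, a ∈ S → b ∈ S → a + b ∈ S + S := by
    intro a b ha hb
    exact Set.add_mem_add ha hb
  by_cases hc0 : c = 0
  · -- diagonal case: representations s(s,s) for each s ∈ S
    subst hc0
    have himg : (fun s => s(s, s)) '' S ⊆ R := by
      rintro _ ⟨s, hs, rfl⟩
      exact ⟨s, hs, s, hs, hchar s, rfl⟩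
    have hinj : Set.InjOn (fun s => s(s, s)) S := by
      intro a _ b _ h
      simp only [Sym2.eq_iff] at h
      tauto
    have hle := Set.ncard_le_ncard himg (Set.toFinite R)
    rw [Set.ncard_image_of_injOn hinj] at hle
    exact le_trans (Nat.le_of_lt (lt_of_le_of_lt (Nat.le_add_left κ _) hsize)) hle
  · rw [Set.mem_add] at hc
    obtain ⟨s₁, hs₁, s₂, hs₂, hs12⟩ := hc
    have hx₀ : s₁ + c ∈ S := by
      have h : s₁ + c = s₂ := by rw [← hs12, hkey]
      rwa [h]
    -- T : elements giving representations; U : saturation of S under +c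
    set T : Set (Fin r → ZMod 2) := {x | x ∈ S ∧ x + c ∈ S} with hTdef
    set S' : Set (Fin r → ZMod 2) := (fun y => y + c) '' S with hS'def
    have hmemS' : ∀ x, x ∈ S' ↔ x + c ∈ S := by
      intro x
      constructor
      · rintro ⟨y, hy, rfl⟩
        rwa [add_assoc, hchar, add_zero]
      · intro h
        exact ⟨x + c, h, by show x + c + c = x; rw [add_assoc, hchar, add_zero]⟩
    set U : Set (Fin r → ZMod 2) := S ∪ S' with hUdef
    have hmemU : ∀ x, x ∈ U → x ∈ S ∨ x + c ∈ S := by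
      intro x hx
      rcases hx with h | h
      · exact Or.inl h
      · exact Or.inr ((hmemS' x).mp h)
    -- disjointness of U and s₁ + U
    have hdisj : Disjoint U ((fun y => s₁ + y) '' U) := by
      rw [Set.disjoint_left]
      rintro w hw ⟨u, hu, huw⟩
      obtain rfl : w = s₁ + u := huw.symm
      rcases hmemU _ hw with hwS | hwcS <;> rcases hmemU _ hu with huS | hucS
      · exact hnotSS _ hwS (hmemSS _ _ hs₁ huS)
      · have he : s₁ + u = (u + c) + s₂ := by
          rw [← hs12]
          have : u + (s₁ + s₂) + s₂ = u + s₁ := by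
            rw [add_assoc, add_assoc, hchar, add_zero, add_comm]
          rw [this, add_comm]
        rw [he] at hwS
        exact hnotSS _ hwS (hmemSS _ _ hucS hs₂)
      · have he : s₁ + u + c = u + s₂ := by
          rw [← hs12]
          rw [add_comm s₁ u, add_assoc, hkey]
        rw [he] at hwcS
        exact hnotSS _ hwcS (hmemSS _ _ huS hs₂)
      · have he : s₁ + u + c = s₁ + (u + c) := by rw [add_assoc]
        rw [he] at hwcS
        exact hnotSS _ hwcS (hmemSS _ _ hs₁ hucS)
    -- cardinality facts
    have hScard : S'.ncard = S.ncard := by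
      rw [hS'def]
      exact Set.ncard_image_of_injective _ (add_left_injective c)
    have hinter : S ∩ S' = T := by
      ext x
      simp only [Set.mem_inter_iff, hmemS' x, hTdef, Set.mem_setOf_eq]
    have hUT : U.ncard + T.ncard = S.ncard + S.ncard := by
      have h := Set.ncard_union_add_ncard_inter S S' (Set.toFinite S) (Set.toFinite S')
      rw [hinter, hScard] at h
      exact h
    have hUbound : U.ncard + U.ncard ≤ 2 ^ r := by
      have himgcard : ((fun y => s₁ + y) '' U).ncard = U.ncard :=
        Set.ncard_image_of_injective _ (add_right_injective s₁)
      have hun : (U ∪ (fun y => s₁ + y) '' U).ncard = U.ncard + U.ncard := by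
        rw [Set.ncard_union_eq hdisj (Set.toFinite _) (Set.toFinite _), himgcard]
      have hle : (U ∪ (fun y => s₁ + y) '' U).ncard ≤ (Set.univ : Set (Fin r → ZMod 2)).ncard :=
        Set.ncard_le_ncard (Set.subset_univ _) (Set.toFinite _)
      have huniv : (Set.univ : Set (Fin r → ZMod 2)).ncard = 2 ^ r := by
        rw [Set.ncard_univ, Nat.card_eq_fintype_card]
        simp [ZMod.card]
      omega
    -- T is large
    have hpow : 2 ^ (r - 2) * 4 = 2 ^ r := by
      have : 2 ^ (r - 2) * 4 = 2 ^ (r - 2 + 2) := by rw [pow_add]; norm_num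
      rw [this]; congr 1; omega
    have hT : 2 * κ + 2 ≤ T.ncard := by omega
    -- map T into R, two-to-one
    have hTR : T.ncard ≤ 2 * R.ncard := by
      set f : (Fin r → ZMod 2) → Sym2 (Fin r → ZMod 2) := fun x => s(x, x + c) with hfdef
      have hTfin : T.Finite := Set.toFinite T
      set Tf : Finset (Fin r → ZMod 2) := hTfin.toFinset with hTfdef
      have hfib : ∀ b ∈ Tf.image f, (Tf.filter fun x => f x = b).card ≤ 2 := by
        intro b hb
        rw [Finset.mem_image] at hb
        obtain ⟨y, _, rfl⟩ := hb
        have hsub : (Tf.filter fun x => f x = f y) ⊆ {y, y + c} := by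
          intro x hx
          rw [Finset.mem_filter] at hx
          have hx2 := hx.2
          simp only [hfdef, Sym2.eq_iff] at hx2
          rcases hx2 with ⟨h1, _⟩ | ⟨h1, _⟩
          · simp [h1]
          · simp [h1]
        calc (Tf.filter fun x => f x = f y).card ≤ ({y, y + c} : Finset _).card :=
              Finset.card_le_card hsub
          _ ≤ 2 := Finset.card_insert_le _ _ |>.trans (by simp)
      have hcard := Finset.card_le_mul_card_image Tf 2 hfib
      have hTcard : T.ncard = Tf.card := by
        rw [hTfdef]; exact Set.ncard_eq_toFinset_card T hTfin
      have himgR : (↑(Tf.image f) : Set (Sym2 (Fin r → ZMod 2))) ⊆ R := by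
        intro z hz
        rw [Finset.coe_image] at hz
        obtain ⟨x, hx, rfl⟩ := hz
        rw [hTfdef, Set.Finite.coe_toFinset] at hx
        exact ⟨x, hx.1, x + c, hx.2, hkey x c, rfl⟩
      have hile : (Tf.image f).card ≤ R.ncard := by
        rw [← Set.ncard_coe_finset]
        exact Set.ncard_le_ncard himgR (Set.toFinite R)
      omega
    omega
end

section
/- Let G be a finite abelian group and let B, C ⊆ G satisfy min{|B|, |C|} ≥ 2. Then |B ⊞₂ C| ≥ min{2|B| + 2|C| − 4 − |G|, |B| − 1}, where B ⊞₂ C is the set of all elements of G having at least 2 representations as b + c with b ∈ B and c ∈ C (representations counted as ordered pairs (b, c)). -/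
open Finset

/-- **Corollary (of Grynkiewicz's theorem).** Let `G` be a finite abelian group and let
`B, C ⊆ G` satisfy `min{|B|, |C|} ≥ 2`. Then `|B ⊞₂ C| ≥ min{2|B| + 2|C| - 4 - |G|, |B| - 1}`,
where `B ⊞₂ C` is the set of elements with at least 2 representations `b + c`, `b ∈ B`, `c ∈ C`
(ordered pairs). -/
theorem stmt_11 (G : Type*) [AddCommGroup G] [Fintype G] (B C : Set G)
    (hB : 2 ≤ B.ncard) (hC : 2 ≤ C.ncard) :
    min (2 * (B.ncard : ℤ) + 2 * (C.ncard : ℤ) - 4 - (Fintype.card G : ℤ))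
        ((B.ncard : ℤ) - 1) ≤
      ((Set.ncard {g : G | 2 ≤ Set.ncard {p : G × G | p.1 ∈ B ∧ p.2 ∈ C ∧ p.1 + p.2 = g}}) : ℤ) := by
  classical
  set B' : Finset G := B.toFinset with hB'
  set C' : Finset G := C.toFinset with hC'
  have hBcard : B.ncard = B'.card := by simp [hB', Set.ncard_eq_toFinset_card']
  have hCcard : C.ncard = C'.card := by simp [hC', Set.ncard_eq_toFinset_card']
  set R : G → Finset (G × G) :=
    fun g => Finset.univ.filter (fun p : G × G => p.1 ∈ B' ∧ p.2 ∈ C' ∧ p.1 + p.2 = g) with hR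
  -- the inner set's ncard is (R g).card
  have hRset : ∀ g : G,
      Set.ncard {p : G × G | p.1 ∈ B ∧ p.2 ∈ C ∧ p.1 + p.2 = g} = (R g).card := by
    intro g
    have : {p : G × G | p.1 ∈ B ∧ p.2 ∈ C ∧ p.1 + p.2 = g} = ↑(R g) := by
      ext p
      simp [hR, hB', hC']
    rw [this, Set.ncard_coe_finset]
  set S : Finset G := Finset.univ.filter (fun g => 2 ≤ (R g).card) with hS
  have hSset : Set.ncard {g : G | 2 ≤ Set.ncard
      {p : G × G | p.1 ∈ B ∧ p.2 ∈ C ∧ p.1 + p.2 = g}} = S.card := by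
    have : {g : G | 2 ≤ Set.ncard {p : G × G | p.1 ∈ B ∧ p.2 ∈ C ∧ p.1 + p.2 = g}} = ↑S := by
      ext g
      simp [hS, hRset g]
    rw [this, Set.ncard_coe_finset]
  -- total count of pairs
  have hsum : ∑ g : G, (R g).card = B'.card * C'.card := by
    rw [← Finset.card_product]
    rw [Finset.card_eq_sum_card_fiberwise (f := fun p : G × G => p.1 + p.2)
      (t := Finset.univ) (fun x _ => Finset.mem_univ _)]
    refine Finset.sum_congr rfl (fun g _ => ?_)
    congr 1
    ext p
    simp [hR, and_comm, and_assoc]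
    tauto
  -- each fiber has size ≤ |C|
  have hfib : ∀ g : G, (R g).card ≤ C'.card := by
    intro g
    apply Finset.card_le_card_of_injOn (fun p => p.2)
    · intro p hp; simp [hR] at hp; exact hp.2.1
    · intro p hp q hq hpq
      simp [hR] at hp hq
      have hpq' : p.2 = q.2 := hpq
      have h1 : p.1 = q.1 := by
        have h : p.1 + p.2 = q.1 + q.2 := by rw [hp.2.2, hq.2.2]
        rw [hpq'] at h
        exact add_right_cancel h
      exact Prod.ext h1 hpq'
  -- fibers off S have size ≤ 1
  have hoff : ∀ g ∈ Finset.univ \ S, (R g).card ≤ 1 := by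
    intro g hg
    simp [hS] at hg
    omega
  have hC2 : 2 ≤ C'.card := hCcard ▸ hC
  have h4 : S.card ≤ Fintype.card G := by
    simpa using Finset.card_le_card (Finset.subset_univ S)
  -- key inequality, integer version
  have hkeyZ : (B'.card : ℤ) * C'.card
      ≤ (Fintype.card G : ℤ) + ((C'.card : ℤ) - 1) * S.card := by
    have hsplit : ∑ g : G, (R g).card
        = ∑ g ∈ S, (R g).card + ∑ g ∈ Finset.univ \ S, (R g).card := by
      rw [← Finset.sum_sdiff (Finset.subset_univ S), Nat.add_comm]
    have h1 : ∑ g ∈ S, (R g).card ≤ S.card * C'.card :=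
      Finset.sum_le_card_nsmul _ _ _ (fun g _ => hfib g)
    have h2 : ∑ g ∈ Finset.univ \ S, (R g).card ≤ (Finset.univ \ S).card * 1 :=
      Finset.sum_le_card_nsmul _ _ _ hoff
    have h3 : (Finset.univ \ S).card = Fintype.card G - S.card := by
      rw [Finset.card_sdiff_of_subset (Finset.subset_univ S), Finset.card_univ]
    have key : B'.card * C'.card ≤ S.card * C'.card + (Fintype.card G - S.card) := by
      rw [← hsum, hsplit]
      have := h2
      rw [h3, Nat.mul_one] at this
      omega
    zify [h4] at key
    linarith
  -- now integer arithmetic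
  rw [hSset, hBcard, hCcard]
  have hk : (2 : ℤ) ≤ (B'.card : ℤ) := by exact_mod_cast hBcard ▸ hB
  have hl : (2 : ℤ) ≤ (C'.card : ℤ) := by exact_mod_cast hC2
  set k : ℤ := (B'.card : ℤ)
  set l : ℤ := (C'.card : ℤ)
  set n : ℤ := (Fintype.card G : ℤ)
  set s : ℤ := (S.card : ℤ)
  have hs0 : (0 : ℤ) ≤ s := by positivity
  rcases le_or_gt n (k + 2 * l - 3) with hn | hn
  · -- show s ≥ k - 1
    refine le_trans (min_le_right _ _) ?_
    by_contra h
    push_neg at h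
    have hs : s ≤ k - 2 := by omega
    nlinarith
  · -- show s ≥ 2k + 2l - 4 - n
    refine le_trans (min_le_left _ _) ?_
    nlinarith [mul_nonneg (by omega : (0:ℤ) ≤ n - (k + 2*l - 2)) (by omega : (0:ℤ) ≤ l - 2)]
end

section
/- Let (V, E) be a finite triangle-free simple graph without isolated vertices whose matching number is at most 2. If |V| ≥ 6, then there exist two distinct vertices v₁, v₂ ∈ V and a partition V = {v₁, v₂} ∪ V₀ ∪ V₁ ∪ V₂ into pairwise disjoint sets such that E consists precisely of all pairs (v₁, v) with v ∈ V₀ ∪ V₁, all pairs (v₂, v) with v ∈ V₀ ∪ V₂, and possibly the pair (v₁, v₂). -/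
section Aux

variable {V : Type*} [Fintype V] {Γ : SimpleGraph V}

/-- No three pairwise disjoint edges. -/
lemma aux_no3
    (hmatch : ∀ M : Set (Sym2 V), M ⊆ Γ.edgeSet →
      (∀ e ∈ M, ∀ f ∈ M, e ≠ f → ∀ v : V, v ∈ e → v ∉ f) → M.ncard ≤ 2)
    {a b c d e f : V}
    (hab : Γ.Adj a b) (hcd : Γ.Adj c d) (hef : Γ.Adj e f)
    (hac : a ≠ c) (had : a ≠ d) (hbc : b ≠ c) (hbd : b ≠ d)
    (hae : a ≠ e) (haf : a ≠ f) (hbe : b ≠ e) (hbf : b ≠ f)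
    (hce : c ≠ e) (hcf : c ≠ f) (hde : d ≠ e) (hdf : d ≠ f) : False := by
  have h1 : s(a,b) ≠ s(c,d) := by simp [Sym2.eq_iff]; tauto
  have h2 : s(a,b) ≠ s(e,f) := by simp [Sym2.eq_iff]; tauto
  have h3 : s(c,d) ≠ s(e,f) := by simp [Sym2.eq_iff]; tauto
  have hsub : ({s(a,b), s(c,d), s(e,f)} : Set (Sym2 V)) ⊆ Γ.edgeSet := by
    intro x hx
    simp only [Set.mem_insert_iff, Set.mem_singleton_iff] at hx
    rcases hx with rfl|rfl|rfl <;> simpa [SimpleGraph.mem_edgeSet]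
  have hpw : ∀ e₁ ∈ ({s(a,b), s(c,d), s(e,f)} : Set (Sym2 V)),
      ∀ e₂ ∈ ({s(a,b), s(c,d), s(e,f)} : Set (Sym2 V)),
      e₁ ≠ e₂ → ∀ v : V, v ∈ e₁ → v ∉ e₂ := by
    intro e₁ he₁ e₂ he₂ hne v hv₁ hv₂
    simp only [Set.mem_insert_iff, Set.mem_singleton_iff] at he₁ he₂
    rcases he₁ with rfl|rfl|rfl <;> rcases he₂ with rfl|rfl|rfl <;>
        rw [Sym2.mem_iff] at hv₁ hv₂
    · exact hne rfl
    · rcases hv₁ with rfl|rfl <;> rcases hv₂ with h|h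
      exacts [hac h, had h, hbc h, hbd h]
    · rcases hv₁ with rfl|rfl <;> rcases hv₂ with h|h
      exacts [hae h, haf h, hbe h, hbf h]
    · rcases hv₁ with rfl|rfl <;> rcases hv₂ with h|h
      exacts [hac h.symm, hbc h.symm, had h.symm, hbd h.symm]
    · exact hne rfl
    · rcases hv₁ with rfl|rfl <;> rcases hv₂ with h|h
      exacts [hce h, hcf h, hde h, hdf h]
    · rcases hv₁ with rfl|rfl <;> rcases hv₂ with h|h
      exacts [hae h.symm, hbe h.symm, haf h.symm, hbf h.symm]
    · rcases hv₁ with rfl|rfl <;> rcases hv₂ with h|h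
      exacts [hce h.symm, hde h.symm, hcf h.symm, hdf h.symm]
    · exact hne rfl
  have hcard : ({s(a,b), s(c,d), s(e,f)} : Set (Sym2 V)).ncard = 3 := by
    rw [Set.ncard_eq_three]
    exact ⟨_, _, _, h1, h2, h3, rfl⟩
  have := hmatch _ hsub hpw
  omega

lemma aux_exists_out (hV : 6 ≤ Fintype.card V) (w a b c d : V) :
    ∃ z : V, z ≠ w ∧ z ≠ a ∧ z ≠ b ∧ z ≠ c ∧ z ≠ d := by
  classical
  by_contra h
  push_neg at h
  have hsub : (Finset.univ : Finset V) ⊆ {w, a, b, c, d} := by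
    intro z _
    simp only [Finset.mem_insert, Finset.mem_singleton]
    by_cases h1 : z = w; · tauto
    by_cases h2 : z = a; · tauto
    by_cases h3 : z = b; · tauto
    by_cases h4 : z = c; · tauto
    exact Or.inr (Or.inr (Or.inr (Or.inr (h z h1 h2 h3 h4))))
  have hle := Finset.card_le_card hsub
  have h5 : ({w, a, b, c, d} : Finset V).card ≤ 5 := by
    apply le_trans (Finset.card_insert_le _ _)
    apply Nat.succ_le_succ
    apply le_trans (Finset.card_insert_le _ _)
    apply Nat.succ_le_succ
    apply le_trans (Finset.card_insert_le _ _)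
    apply Nat.succ_le_succ
    apply le_trans (Finset.card_insert_le _ _)
    apply Nat.succ_le_succ
    simp
  rw [Finset.card_univ] at hle
  omega

/-- If some outside vertex is adjacent to `a`, then no outside vertex is adjacent to `b`. -/
lemma aux_noB
    (htf : ∀ a b c : V, ¬(Γ.Adj a b ∧ Γ.Adj b c ∧ Γ.Adj a c))
    (hmatch : ∀ M : Set (Sym2 V), M ⊆ Γ.edgeSet →
      (∀ e ∈ M, ∀ f ∈ M, e ≠ f → ∀ v : V, v ∈ e → v ∉ f) → M.ncard ≤ 2)
    {a b c d : V} (hab : Γ.Adj a b) (hcd : Γ.Adj c d)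
    (hac : a ≠ c) (had : a ≠ d) (hbc : b ≠ c) (hbd : b ≠ d)
    (hAa : ∃ x, x ≠ a ∧ x ≠ b ∧ x ≠ c ∧ x ≠ d ∧ Γ.Adj x a) :
    ∀ z, z ≠ a → z ≠ b → z ≠ c → z ≠ d → ¬ Γ.Adj z b := by
  intro z hz1 hz2 hz3 hz4 hzb
  obtain ⟨x, hx1, hx2, hx3, hx4, hxa⟩ := hAa
  by_cases hxz : x = z
  · subst hxz
    exact htf a b x ⟨hab, hzb.symm, hxa.symm⟩
  · exact aux_no3 hmatch hxa hzb hcd hxz hx2 (Ne.symm hz1) hab.ne hx3 hx4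
      hac had hz3 hz4 hbc hbd

end Aux

section Key

variable {V : Type*} [Fintype V] {Γ : SimpleGraph V}

lemma aux_key2
    (htf : ∀ a b c : V, ¬(Γ.Adj a b ∧ Γ.Adj b c ∧ Γ.Adj a c))
    (hiso : ∀ v : V, ∃ w : V, Γ.Adj v w)
    (hmatch : ∀ M : Set (Sym2 V), M ⊆ Γ.edgeSet →
      (∀ e ∈ M, ∀ f ∈ M, e ≠ f → ∀ v : V, v ∈ e → v ∉ f) → M.ncard ≤ 2)
    (hV : 6 ≤ Fintype.card V)
    {a b c d : V} (hab : Γ.Adj a b) (hcd : Γ.Adj c d)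
    (hac : a ≠ c) (had : a ≠ d) (hbc : b ≠ c) (hbd : b ≠ d)
    (hAa : ∃ x, x ≠ a ∧ x ≠ b ∧ x ≠ c ∧ x ≠ d ∧ Γ.Adj x a)
    (hAc : ∃ y, y ≠ a ∧ y ≠ b ∧ y ≠ c ∧ y ≠ d ∧ Γ.Adj y c) :
    ∃ v₁ v₂ : V, v₁ ≠ v₂ ∧ ∀ x y : V, Γ.Adj x y → x = v₁ ∨ x = v₂ ∨ y = v₁ ∨ y = v₂ := by
  classical
  have hXedge : ∀ u v : V, Γ.Adj u v →
      (u ≠ a ∧ u ≠ b ∧ u ≠ c ∧ u ≠ d) → (v ≠ a ∧ v ≠ b ∧ v ≠ c ∧ v ≠ d) → False := by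
    intro u v huv hu hv
    exact aux_no3 hmatch huv hab hcd hu.1 hu.2.1 hv.1 hv.2.1 hu.2.2.1 hu.2.2.2
      hv.2.2.1 hv.2.2.2 hac had hbc hbd
  have noB : ∀ z, z ≠ a → z ≠ b → z ≠ c → z ≠ d → ¬ Γ.Adj z b :=
    aux_noB htf hmatch hab hcd hac had hbc hbd hAa
  have noD : ∀ z, z ≠ a → z ≠ b → z ≠ c → z ≠ d → ¬ Γ.Adj z d := by
    intro z h1 h2 h3 h4
    obtain ⟨y, hy1, hy2, hy3, hy4, hyc⟩ := hAc
    exact aux_noB htf hmatch hcd hab (Ne.symm hac) (Ne.symm hbc) (Ne.symm had)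
      (Ne.symm hbd) ⟨y, hy3, hy4, hy1, hy2, hyc⟩ z h3 h4 h1 h2
  -- find distinct outside x ~ a and y ~ c
  have pair : ∃ x y, x ≠ y ∧ Γ.Adj x a ∧ Γ.Adj y c ∧
      (x ≠ a ∧ x ≠ b ∧ x ≠ c ∧ x ≠ d) ∧ (y ≠ a ∧ y ≠ b ∧ y ≠ c ∧ y ≠ d) := by
    obtain ⟨x, hx1, hx2, hx3, hx4, hxa⟩ := hAa
    obtain ⟨y, hy1, hy2, hy3, hy4, hyc⟩ := hAc
    by_cases hxy : x = y
    · subst hxy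
      obtain ⟨z, hzx, hza, hzb, hzc, hzd⟩ := aux_exists_out hV x a b c d
      obtain ⟨t, hzt⟩ := hiso z
      have ht : t = a ∨ t = c := by
        by_contra ht
        push_neg at ht
        by_cases htb : t = b
        · exact noB z hza hzb hzc hzd (htb ▸ hzt)
        by_cases htd : t = d
        · exact noD z hza hzb hzc hzd (htd ▸ hzt)
        exact hXedge z t hzt ⟨hza, hzb, hzc, hzd⟩ ⟨ht.1, htb, ht.2, htd⟩
      rcases ht with rfl|rfl
      · exact ⟨z, x, hzx, hzt, hyc, ⟨hza, hzb, hzc, hzd⟩, ⟨hy1, hy2, hy3, hy4⟩⟩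
      · exact ⟨x, z, Ne.symm hzx, hxa, hzt, ⟨hx1, hx2, hx3, hx4⟩, ⟨hza, hzb, hzc, hzd⟩⟩
    · exact ⟨x, y, hxy, hxa, hyc, ⟨hx1, hx2, hx3, hx4⟩, ⟨hy1, hy2, hy3, hy4⟩⟩
  refine ⟨a, c, hac, ?_⟩
  intro u v huv
  by_contra hcon
  push_neg at hcon
  obtain ⟨hua, huc, hva, hvc⟩ := hcon
  have hout : ∀ w w', Γ.Adj w w' → w ≠ a → w ≠ c → w' ≠ a → w' ≠ c →
      w = b ∨ w = d := by
    intro w w' hww hwa hwc hw'a hw'c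
    by_contra hw
    push_neg at hw
    by_cases hw'b : w' = b
    · exact absurd (hw'b ▸ hww) (noB w hwa hw.1 hwc hw.2)
    by_cases hw'd : w' = d
    · exact absurd (hw'd ▸ hww) (noD w hwa hw.1 hwc hw.2)
    exact hXedge w w' hww ⟨hwa, hw.1, hwc, hw.2⟩ ⟨hw'a, hw'b, hw'c, hw'd⟩
  have hu := hout u v huv hua huc hva hvc
  have hv := hout v u huv.symm hva hvc hua huc
  have hbd' : Γ.Adj b d := by
    have hne := huv.ne
    rcases hu with rfl|rfl <;> rcases hv with rfl|rfl
    · exact absurd rfl hne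
    · exact huv
    · exact huv.symm
    · exact absurd rfl hne
  obtain ⟨x, y, hxy, hxa, hyc, ⟨_, hxb, hxc, hxd⟩, ⟨hya, hyb, _, hyd⟩⟩ := pair
  exact aux_no3 hmatch hxa hyc hbd' hxy hxc (Ne.symm hya) hac hxb hxd hab.ne had
    hyb hyd (Ne.symm hbc) hcd.ne

lemma aux_key
    (htf : ∀ a b c : V, ¬(Γ.Adj a b ∧ Γ.Adj b c ∧ Γ.Adj a c))
    (hiso : ∀ v : V, ∃ w : V, Γ.Adj v w)
    (hmatch : ∀ M : Set (Sym2 V), M ⊆ Γ.edgeSet →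
      (∀ e ∈ M, ∀ f ∈ M, e ≠ f → ∀ v : V, v ∈ e → v ∉ f) → M.ncard ≤ 2)
    (hV : 6 ≤ Fintype.card V)
    {a b c d : V} (hab : Γ.Adj a b) (hcd : Γ.Adj c d)
    (hac : a ≠ c) (had : a ≠ d) (hbc : b ≠ c) (hbd : b ≠ d)
    (hAa : ∃ x, x ≠ a ∧ x ≠ b ∧ x ≠ c ∧ x ≠ d ∧ Γ.Adj x a) :
    ∃ v₁ v₂ : V, v₁ ≠ v₂ ∧ ∀ x y : V, Γ.Adj x y → x = v₁ ∨ x = v₂ ∨ y = v₁ ∨ y = v₂ := by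
  classical
  have hXedge : ∀ u v : V, Γ.Adj u v →
      (u ≠ a ∧ u ≠ b ∧ u ≠ c ∧ u ≠ d) → (v ≠ a ∧ v ≠ b ∧ v ≠ c ∧ v ≠ d) → False := by
    intro u v huv hu hv
    exact aux_no3 hmatch huv hab hcd hu.1 hu.2.1 hv.1 hv.2.1 hu.2.2.1 hu.2.2.2
      hv.2.2.1 hv.2.2.2 hac had hbc hbd
  by_cases hAc : ∃ y, y ≠ a ∧ y ≠ b ∧ y ≠ c ∧ y ≠ d ∧ Γ.Adj y c
  · exact aux_key2 htf hiso hmatch hV hab hcd hac had hbc hbd hAa hAc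
  by_cases hAd : ∃ y, y ≠ a ∧ y ≠ b ∧ y ≠ c ∧ y ≠ d ∧ Γ.Adj y d
  · obtain ⟨x, hx1, hx2, hx3, hx4, hxa⟩ := hAa
    obtain ⟨y, hy1, hy2, hy3, hy4, hyd⟩ := hAd
    exact aux_key2 htf hiso hmatch hV hab hcd.symm had hac hbd hbc
      ⟨x, hx1, hx2, hx4, hx3, hxa⟩ ⟨y, hy1, hy2, hy4, hy3, hyd⟩
  have noB : ∀ z, z ≠ a → z ≠ b → z ≠ c → z ≠ d → ¬ Γ.Adj z b :=
    aux_noB htf hmatch hab hcd hac had hbc hbd hAa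
  have noC : ∀ z, z ≠ a → z ≠ b → z ≠ c → z ≠ d → ¬ Γ.Adj z c := by
    intro z h1 h2 h3 h4 hzc
    exact hAc ⟨z, h1, h2, h3, h4, hzc⟩
  have noD : ∀ z, z ≠ a → z ≠ b → z ≠ c → z ≠ d → ¬ Γ.Adj z d := by
    intro z h1 h2 h3 h4 hzd
    exact hAd ⟨z, h1, h2, h3, h4, hzd⟩
  by_cases hbd' : Γ.Adj b d
  · refine ⟨a, d, had, ?_⟩
    intro u v huv
    by_contra hcon
    push_neg at hcon
    obtain ⟨hua, hud, hva, hvd⟩ := hcon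
    have hout : ∀ w w', Γ.Adj w w' → w ≠ a → w ≠ d → w' ≠ a → w' ≠ d →
        w = b ∨ w = c := by
      intro w w' hww hwa hwd hw'a hw'd
      by_contra hw
      push_neg at hw
      by_cases hw'b : w' = b
      · exact absurd (hw'b ▸ hww) (noB w hwa hw.1 hw.2 hwd)
      by_cases hw'c : w' = c
      · exact absurd (hw'c ▸ hww) (noC w hwa hw.1 hw.2 hwd)
      exact hXedge w w' hww ⟨hwa, hw.1, hw.2, hwd⟩ ⟨hw'a, hw'b, hw'c, hw'd⟩
    have hu := hout u v huv hua hud hva hvd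
    have hv := hout v u huv.symm hva hvd hua hud
    have hbc' : Γ.Adj b c := by
      have hne := huv.ne
      rcases hu with rfl|rfl <;> rcases hv with rfl|rfl
      · exact absurd rfl hne
      · exact huv
      · exact huv.symm
      · exact absurd rfl hne
    exact htf b c d ⟨hbc', hcd, hbd'⟩
  · refine ⟨a, c, hac, ?_⟩
    intro u v huv
    by_contra hcon
    push_neg at hcon
    obtain ⟨hua, huc, hva, hvc⟩ := hcon
    have hout : ∀ w w', Γ.Adj w w' → w ≠ a → w ≠ c → w' ≠ a → w' ≠ c →
        w = b ∨ w = d := by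
      intro w w' hww hwa hwc hw'a hw'c
      by_contra hw
      push_neg at hw
      by_cases hw'b : w' = b
      · exact absurd (hw'b ▸ hww) (noB w hwa hw.1 hwc hw.2)
      by_cases hw'd : w' = d
      · exact absurd (hw'd ▸ hww) (noD w hwa hw.1 hwc hw.2)
      exact hXedge w w' hww ⟨hwa, hw.1, hwc, hw.2⟩ ⟨hw'a, hw'b, hw'c, hw'd⟩
    have hu := hout u v huv hua huc hva hvc
    have hv := hout v u huv.symm hva hvc hua huc
    apply hbd'
    have hne := huv.ne
    rcases hu with rfl|rfl <;> rcases hv with rfl|rfl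
    · exact absurd rfl hne
    · exact huv
    · exact huv.symm
    · exact absurd rfl hne

lemma aux_cover
    (htf : ∀ a b c : V, ¬(Γ.Adj a b ∧ Γ.Adj b c ∧ Γ.Adj a c))
    (hiso : ∀ v : V, ∃ w : V, Γ.Adj v w)
    (hmatch : ∀ M : Set (Sym2 V), M ⊆ Γ.edgeSet →
      (∀ e ∈ M, ∀ f ∈ M, e ≠ f → ∀ v : V, v ∈ e → v ∉ f) → M.ncard ≤ 2)
    (hV : 6 ≤ Fintype.card V) :
    ∃ v₁ v₂ : V, v₁ ≠ v₂ ∧ ∀ x y : V, Γ.Adj x y → x = v₁ ∨ x = v₂ ∨ y = v₁ ∨ y = v₂ := by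
  classical
  by_cases hE : ∃ a b c d : V, Γ.Adj a b ∧ Γ.Adj c d ∧ a ≠ c ∧ a ≠ d ∧ b ≠ c ∧ b ≠ d
  · obtain ⟨a, b, c, d, hab, hcd, hac, had, hbc, hbd⟩ := hE
    obtain ⟨z, _, hza, hzb, hzc, hzd⟩ := aux_exists_out hV a a b c d
    obtain ⟨t, hzt⟩ := hiso z
    have ht4 : t = a ∨ t = b ∨ t = c ∨ t = d := by
      by_contra ht
      push_neg at ht
      exact aux_no3 hmatch hzt hab hcd hza hzb ht.1 ht.2.1 hzc hzd ht.2.2.1 ht.2.2.2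
        hac had hbc hbd
    rcases ht4 with rfl|rfl|rfl|rfl
    · exact aux_key htf hiso hmatch hV hab hcd hac had hbc hbd
        ⟨z, hza, hzb, hzc, hzd, hzt⟩
    · exact aux_key htf hiso hmatch hV hab.symm hcd hbc hbd hac had
        ⟨z, hzb, hza, hzc, hzd, hzt⟩
    · exact aux_key htf hiso hmatch hV hcd hab (Ne.symm hac) (Ne.symm hbc)
        (Ne.symm had) (Ne.symm hbd) ⟨z, hzc, hzd, hza, hzb, hzt⟩
    · exact aux_key htf hiso hmatch hV hcd.symm hab (Ne.symm had) (Ne.symm hbd)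
        (Ne.symm hac) (Ne.symm hbc) ⟨z, hzd, hzc, hza, hzb, hzt⟩
  · push_neg at hE
    have hne : Nonempty V := Fintype.card_pos_iff.mp (by omega)
    obtain ⟨v⟩ := hne
    obtain ⟨w, hvw⟩ := hiso v
    refine ⟨v, w, hvw.ne, ?_⟩
    intro x y hxy
    by_contra hc
    push_neg at hc
    exact hc.2.2.2 (hE x y v w hxy hvw hc.1 hc.2.1 hc.2.2.1)

end Key

/-- **Lemma.** Let `(V, E)` be a finite triangle-free simple graph without isolated vertices
whose matching number is at most 2 (every matching — a set of pairwise non-incident edges —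
has at most 2 edges). If `|V| ≥ 6`, then there are distinct `v₁, v₂` and a partition
`V = {v₁, v₂} ∪ V₀ ∪ V₁ ∪ V₂` such that the edges are exactly all pairs `(v₁, v)` with
`v ∈ V₀ ∪ V₁`, all pairs `(v₂, v)` with `v ∈ V₀ ∪ V₂`, and possibly the pair `(v₁, v₂)`. -/
theorem stmt_12 (V : Type*) [Fintype V] (Γ : SimpleGraph V)
    (htf : ∀ a b c : V, ¬(Γ.Adj a b ∧ Γ.Adj b c ∧ Γ.Adj a c))
    (hiso : ∀ v : V, ∃ w : V, Γ.Adj v w)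
    (hmatch : ∀ M : Set (Sym2 V), M ⊆ Γ.edgeSet →
      (∀ e ∈ M, ∀ f ∈ M, e ≠ f → ∀ v : V, v ∈ e → v ∉ f) → M.ncard ≤ 2)
    (hV : 6 ≤ Fintype.card V) :
    ∃ v₁ v₂ : V, ∃ V₀ V₁ V₂ : Set V, v₁ ≠ v₂ ∧
      v₁ ∉ V₀ ∪ V₁ ∪ V₂ ∧ v₂ ∉ V₀ ∪ V₁ ∪ V₂ ∧
      Disjoint V₀ V₁ ∧ Disjoint V₀ V₂ ∧ Disjoint V₁ V₂ ∧
      {v₁, v₂} ∪ V₀ ∪ V₁ ∪ V₂ = Set.univ ∧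
      (∀ v ∈ V₀ ∪ V₁, Γ.Adj v₁ v) ∧
      (∀ v ∈ V₀ ∪ V₂, Γ.Adj v₂ v) ∧
      (∀ x y : V, Γ.Adj x y →
        (x = v₁ ∧ y ∈ V₀ ∪ V₁) ∨ (y = v₁ ∧ x ∈ V₀ ∪ V₁) ∨
        (x = v₂ ∧ y ∈ V₀ ∪ V₂) ∨ (y = v₂ ∧ x ∈ V₀ ∪ V₂) ∨
        (x = v₁ ∧ y = v₂) ∨ (x = v₂ ∧ y = v₁)) := by
  classical
  obtain ⟨v₁, v₂, hne, hcov⟩ := aux_cover htf hiso hmatch hV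
  refine ⟨v₁, v₂, {v | Γ.Adj v₁ v ∧ Γ.Adj v₂ v},
    {v | v ≠ v₂ ∧ Γ.Adj v₁ v ∧ ¬Γ.Adj v₂ v},
    {v | v ≠ v₁ ∧ Γ.Adj v₂ v ∧ ¬Γ.Adj v₁ v}, hne, ?_, ?_, ?_, ?_, ?_, ?_, ?_, ?_, ?_⟩
  · simp only [Set.mem_union, Set.mem_setOf_eq]
    rintro ((⟨h, -⟩ | ⟨-, h, -⟩) | ⟨h, -⟩)
    · exact Γ.irrefl h
    · exact Γ.irrefl h
    · exact h rfl
  · simp only [Set.mem_union, Set.mem_setOf_eq]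
    rintro ((⟨-, h⟩ | ⟨h, -⟩) | ⟨-, h, -⟩)
    · exact Γ.irrefl h
    · exact h rfl
    · exact Γ.irrefl h
  · rw [Set.disjoint_left]
    rintro v ⟨-, h⟩ ⟨-, -, h'⟩
    exact h' h
  · rw [Set.disjoint_left]
    rintro v ⟨h, -⟩ ⟨-, -, h'⟩
    exact h' h
  · rw [Set.disjoint_left]
    rintro v ⟨-, h, -⟩ ⟨-, -, h'⟩
    exact h' h
  · ext v
    simp only [Set.mem_union, Set.mem_insert_iff, Set.mem_singleton_iff,
      Set.mem_setOf_eq, Set.mem_univ, iff_true]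
    by_cases h1 : v = v₁
    · exact Or.inl (Or.inl (Or.inl (Or.inl h1)))
    by_cases h2 : v = v₂
    · exact Or.inl (Or.inl (Or.inl (Or.inr h2)))
    obtain ⟨w, hvw⟩ := hiso v
    have hadj : Γ.Adj v₁ v ∨ Γ.Adj v₂ v := by
      rcases hcov v w hvw with h|h|h|h
      · exact absurd h h1
      · exact absurd h h2
      · exact Or.inl (h ▸ hvw).symm
      · exact Or.inr (h ▸ hvw).symm
    by_cases ha1 : Γ.Adj v₁ v
    · by_cases ha2 : Γ.Adj v₂ v
      · exact Or.inl (Or.inl (Or.inr ⟨ha1, ha2⟩))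
      · exact Or.inl (Or.inr ⟨h2, ha1, ha2⟩)
    · by_cases ha2 : Γ.Adj v₂ v
      · exact Or.inr ⟨h1, ha2, ha1⟩
      · rcases hadj with h|h
        · exact absurd h ha1
        · exact absurd h ha2
  · rintro v ((⟨h, -⟩) | ⟨-, h, -⟩) <;> exact h
  · rintro v ((⟨-, h⟩) | ⟨-, h, -⟩) <;> exact h
  · intro x y h
    simp only [Set.mem_union, Set.mem_setOf_eq]
    rcases hcov x y h with rfl|rfl|rfl|rfl
    · -- x = v₁
      by_cases hy2 : y = v₂
      · exact Or.inr (Or.inr (Or.inr (Or.inr (Or.inl ⟨rfl, hy2⟩))))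
      · by_cases ha2 : Γ.Adj v₂ y
        · exact Or.inl ⟨rfl, Or.inl ⟨h, ha2⟩⟩
        · exact Or.inl ⟨rfl, Or.inr ⟨hy2, h, ha2⟩⟩
    · -- x = v₂
      by_cases hy1 : y = v₁
      · exact Or.inr (Or.inr (Or.inr (Or.inr (Or.inr ⟨rfl, hy1⟩))))
      · by_cases ha1 : Γ.Adj v₁ y
        · exact Or.inr (Or.inr (Or.inl ⟨rfl, Or.inl ⟨ha1, h⟩⟩))
        · exact Or.inr (Or.inr (Or.inl ⟨rfl, Or.inr ⟨hy1, h, ha1⟩⟩))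
    · -- y = v₁
      by_cases hx2 : x = v₂
      · exact Or.inr (Or.inr (Or.inr (Or.inr (Or.inr ⟨hx2, rfl⟩))))
      · by_cases ha2 : Γ.Adj v₂ x
        · exact Or.inr (Or.inl ⟨rfl, Or.inl ⟨h.symm, ha2⟩⟩)
        · exact Or.inr (Or.inl ⟨rfl, Or.inr ⟨hx2, h.symm, ha2⟩⟩)
    · -- y = v₂
      by_cases hx1 : x = v₁
      · exact Or.inr (Or.inr (Or.inr (Or.inr (Or.inl ⟨hx1, rfl⟩))))
      · by_cases ha1 : Γ.Adj v₁ x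
        · exact Or.inr (Or.inr (Or.inr (Or.inl ⟨rfl, Or.inl ⟨ha1, h.symm⟩⟩)))
        · exact Or.inr (Or.inr (Or.inr (Or.inl ⟨rfl, Or.inr ⟨hx1, h.symm, ha1⟩⟩)))
end

section
/- Let δ ≥ 1 be an integer and let (V, E) be a finite simple graph such that deg(v₁) + deg(v₂) ≥ δ holds for every edge (v₁, v₂) ∈ E. If (V, E) has no isolated vertices, then δ·|E| ≥ (δ − 1)·|V| (equivalently, |E| ≥ (1 − 1/δ)·|V|). -/
/-!
Every vertex `v` spreads a unit of charge evenly over its `deg v` incident edges, so the total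
charge is `|V|`. An edge `uv` receives `1/deg u + 1/deg v = (deg u + deg v)/(deg u · deg v)`,
and `(δ - 1)(a + b) ≤ δ·a·b` whenever `a, b ≥ 1` and `a + b ≥ δ`; summing over the edges gives
`(δ - 1)·|V| ≤ δ·|E|`.
-/

open Finset

theorem Nat.sub_one_mul_add_le_mul_mul {δ a b : ℕ} (ha : 1 ≤ a) (hb : 1 ≤ b) (hab : δ ≤ a + b) :
    (δ - 1) * (a + b) ≤ δ * (a * b) := by
  rcases δ with _ | k
  · simp
  rw [Nat.add_sub_cancel]
  rcases eq_or_lt_of_le ha with rfl | ha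
  · nlinarith
  rcases eq_or_lt_of_le hb with rfl | hb
  · nlinarith
  have : a + b ≤ a * b := by nlinarith
  nlinarith

theorem Nat.cast_sub_one_mul_inv_add_inv_le {K : Type*} [Field K] [LinearOrder K]
    [IsStrictOrderedRing K] {δ a b : ℕ} (ha : 1 ≤ a) (hb : 1 ≤ b) (hab : δ ≤ a + b) :
    ((δ - 1 : ℕ) : K) * ((a : K)⁻¹ + (b : K)⁻¹) ≤ δ := by
  have ha' : (0 : K) < a := by exact_mod_cast ha
  have hb' : (0 : K) < b := by exact_mod_cast hb
  rw [inv_add_inv ha'.ne' hb'.ne', mul_div_assoc', div_le_iff₀ (by positivity)]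
  exact_mod_cast Nat.sub_one_mul_add_le_mul_mul ha hb hab

namespace SimpleGraph

variable {V : Type*} (G : SimpleGraph V)

theorem ncard_neighborSet (v : V) [Fintype (G.neighborSet v)] :
    (G.neighborSet v).ncard = G.degree v := by
  rw [Set.ncard_eq_toFinset_card', Set.toFinset_card, card_neighborSet_eq_degree]

theorem ncard_edgeSet [Fintype G.edgeSet] : G.edgeSet.ncard = #G.edgeFinset := by
  rw [← coe_edgeFinset, Set.ncard_coe_finset]

variable [Fintype V] [DecidableRel G.Adj]

theorem sum_dart_fst_eq_sum_degree_smul {M : Type*} [AddCommMonoid M] (f : V → M) :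
    ∑ d : G.Dart, f d.fst = ∑ v, G.degree v • f v := by
  classical
  rw [← sum_fiberwise_of_maps_to (g := fun d : G.Dart => d.fst) fun d _ => mem_univ d.fst]
  refine sum_congr rfl fun v _ => ?_
  rw [sum_congr rfl fun d hd => congrArg f (mem_filter.mp hd).2, sum_const]
  congr 1
  convert G.dart_fst_fiber_card_eq_degree v

theorem sum_dart_snd_eq_sum_dart_fst {M : Type*} [AddCommMonoid M] (f : V → M) :
    ∑ d : G.Dart, f d.snd = ∑ d : G.Dart, f d.fst :=
  Fintype.sum_equiv (Dart.symm_involutive.toPerm _) _ _ fun _ => rfl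

theorem mul_card_le_mul_card_edgeFinset {K : Type*} [Field K] [LinearOrder K]
    [IsStrictOrderedRing K] (hpos : ∀ v, 0 < G.degree v) (a b : K)
    (hedge : ∀ u v, G.Adj u v → a * ((G.degree u : K)⁻¹ + (G.degree v : K)⁻¹) ≤ b) :
    a * Fintype.card V ≤ b * #G.edgeFinset := by
  have hcharge : (Fintype.card V : K) = ∑ d : G.Dart, (G.degree d.fst : K)⁻¹ := by
    rw [G.sum_dart_fst_eq_sum_degree_smul fun v => (G.degree v : K)⁻¹]
    simp [mul_inv_cancel₀ (Nat.cast_ne_zero.mpr (hpos _).ne' : (G.degree _ : K) ≠ 0)]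
  have hedges : 2 * (a * Fintype.card V) ≤ 2 * (b * #G.edgeFinset) :=
    calc 2 * (a * Fintype.card V)
        = ∑ d : G.Dart, a * ((G.degree d.fst : K)⁻¹ + (G.degree d.snd : K)⁻¹) := by
          rw [← mul_sum, sum_add_distrib,
            G.sum_dart_snd_eq_sum_dart_fst fun v => (G.degree v : K)⁻¹, ← hcharge]
          ring
      _ ≤ ∑ _d : G.Dart, b := sum_le_sum fun d _ => hedge _ _ d.adj
      _ = 2 * (b * #G.edgeFinset) := by
          rw [sum_const, card_univ, dart_card_eq_twice_card_edges, nsmul_eq_mul]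
          push_cast
          ring
  linarith

end SimpleGraph

theorem stmt_13_general (δ : ℕ) (V : Type*) [Fintype V] (Γ : SimpleGraph V)
    (hdeg : ∀ v₁ v₂ : V, Γ.Adj v₁ v₂ →
      δ ≤ (Γ.neighborSet v₁).ncard + (Γ.neighborSet v₂).ncard)
    (hiso : ∀ v : V, ∃ w : V, Γ.Adj v w) :
    (δ - 1) * Fintype.card V ≤ δ * Γ.edgeSet.ncard := by
  classical
  simp only [Γ.ncard_neighborSet] at hdeg
  have hpos (v : V) : 0 < Γ.degree v := (Γ.degree_pos_iff_exists_adj v).2 (hiso v)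
  have key := Γ.mul_card_le_mul_card_edgeFinset (K := ℚ) hpos (δ - 1 : ℕ) δ fun u v huv =>
    Nat.cast_sub_one_mul_inv_add_inv_le (hpos u) (hpos v) (hdeg u v huv)
  rw [Γ.ncard_edgeSet]
  exact_mod_cast key

/-- **Lemma.** Let `δ ≥ 1` and let `(V, E)` be a finite simple graph in which
`deg(v₁) + deg(v₂) ≥ δ` for every edge `(v₁, v₂)`. If there are no isolated vertices, then
`δ·|E| ≥ (δ - 1)·|V|`. -/
theorem stmt_13 (δ : ℕ) (hδ : 1 ≤ δ) (V : Type*) [Fintype V] (Γ : SimpleGraph V)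
    (hdeg : ∀ v₁ v₂ : V, Γ.Adj v₁ v₂ →
      δ ≤ (Γ.neighborSet v₁).ncard + (Γ.neighborSet v₂).ncard)
    (hiso : ∀ v : V, ∃ w : V, Γ.Adj v w) :
    (δ - 1) * Fintype.card V ≤ δ * Γ.edgeSet.ncard :=
  stmt_13_general δ V Γ hdeg hiso
end

section
/- Let r ≥ 1 be an integer. If A ⊆ G is a round subset of the elementary abelian 2-group G of rank r, then 2·|D(A)| ≥ |A|. -/
open Pointwise

/-- **Corollary.** Let `r ≥ 1`. If `A ⊆ G = Fin r → ZMod 2` is round, then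
`2·|D(A)| ≥ |A|`. -/
theorem stmt_14 (r : ℕ) (hr : 1 ≤ r) (A : Set (Fin r → ZMod 2))
    (hround : ∀ B : Set (Fin r → ZMod 2), B ⊂ A → B + B ≠ A + A) :
    A.ncard ≤ 2 * (urep A).ncard := by
  classical
  have key : ∀ a ∈ A, ∃ d ∈ urep A, ∃ x ∈ A, a + x = d := by
    intro a ha
    have hss : A \ {a} ⊂ A := Set.sdiff_singleton_ssubset.mpr ha
    have hne := hround _ hss
    have hsub : (A \ {a}) + (A \ {a}) ⊆ A + A :=
      Set.add_subset_add Set.diff_subset Set.diff_subset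
    obtain ⟨d, hdA, hdB⟩ := Set.exists_of_ssubset (hsub.ssubset_of_ne hne)
    obtain ⟨b₁, hb₁, b₂, hb₂, rfl⟩ := Set.mem_add.mp hdA
    have hcase : ∀ c₁ ∈ A, ∀ c₂ ∈ A, c₁ + c₂ = b₁ + b₂ → c₁ = a ∨ c₂ = a := by
      intro c₁ h1 c₂ h2 heq
      by_contra hc
      push_neg at hc
      refine hdB ?_
      rw [← heq]
      exact Set.add_mem_add ⟨h1, by simpa using hc.1⟩ ⟨h2, by simpa using hc.2⟩
    obtain ⟨x, hx, hax⟩ : ∃ x ∈ A, a + x = b₁ + b₂ := by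
      rcases hcase b₁ hb₁ b₂ hb₂ rfl with h | h
      · exact ⟨b₂, hb₂, by rw [h]⟩
      · exact ⟨b₁, hb₁, by rw [← h, add_comm]⟩
    refine ⟨b₁ + b₂, ⟨a, ha, x, hx, hax, ?_⟩, x, hx, hax⟩
    intro c₁ h1 c₂ h2 heq
    rcases hcase c₁ h1 c₂ h2 heq with h | h
    · subst h
      exact Or.inl ⟨rfl, add_left_cancel (heq.trans hax.symm)⟩
    · subst h
      refine Or.inr ⟨?_, rfl⟩
      have : c₂ + c₁ = c₂ + x := by rw [add_comm c₂ c₁, heq, ← hax]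
      exact add_left_cancel this
  choose! f hd g hg hfg using key
  have hAfin : A.Finite := Set.toFinite A
  have hUfin : (urep A).Finite := Set.toFinite _
  set s := hAfin.toFinset with hs
  have himg : s.image f ⊆ hUfin.toFinset := by
    intro d hd'
    obtain ⟨a, ha, rfl⟩ := Finset.mem_image.mp hd'
    exact hUfin.mem_toFinset.mpr (hd a (hAfin.mem_toFinset.mp ha))
  have hmain : s.card ≤ 2 * (s.image f).card := by
    refine Finset.card_le_mul_card_image s 2 ?_
    intro d hd'
    obtain ⟨a0, ha0, rfl⟩ := Finset.mem_image.mp hd'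
    have ha0A : a0 ∈ A := hAfin.mem_toFinset.mp ha0
    obtain ⟨p, hp, q, hq, hpq, huniq⟩ := hd a0 ha0A
    have hsubpq : (s.filter fun x => f x = f a0) ⊆ {p, q} := by
      intro x hx
      obtain ⟨hxs, hfx⟩ := Finset.mem_filter.mp hx
      have hxA : x ∈ A := hAfin.mem_toFinset.mp hxs
      have := huniq x hxA (g x) (hg x hxA) (by rw [hfg x hxA, hfx])
      rcases this with ⟨h, -⟩ | ⟨h, -⟩
      · simp [h]
      · simp [h]
    calc (s.filter fun x => f x = f a0).card ≤ ({p, q} : Finset _).card :=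
          Finset.card_le_card hsubpq
      _ ≤ 2 := by
          refine (Finset.card_insert_le p {q}).trans ?_
          simp
  calc A.ncard = s.card := Set.ncard_eq_toFinset_card A hAfin
    _ ≤ 2 * (s.image f).card := hmain
    _ ≤ 2 * hUfin.toFinset.card := by
        exact Nat.mul_le_mul_left 2 (Finset.card_le_card himg)
    _ = 2 * (urep A).ncard := by rw [Set.ncard_eq_toFinset_card (urep A) hUfin]
end

section
/- Let r ≥ 1 be an integer and let A ⊆ G be a round subset of the elementary abelian 2-group G of rank r. Then |A| ≤ |D(A)| + t, where t is the matching number of the graph Γ(A). -/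
open Pointwise

section AuxLemmas
variable {r : ℕ}

lemma my_add_self (x : Fin r → ZMod 2) : x + x = 0 := by
  funext i
  have h : ∀ z : ZMod 2, z + z = 0 := by decide
  exact h (x i)

lemma gam_adj {A : Set (Fin r → ZMod 2)} {x y : Fin r → ZMod 2} :
    (gam A).Adj x y ↔ x ≠ y ∧ x ∈ A ∧ y ∈ A ∧ x + y ∈ urep A := by
  rw [gam, SimpleGraph.fromRel_adj]
  constructor
  · rintro ⟨hne, h | h⟩
    · exact ⟨hne, h⟩
    · exact ⟨hne, h.2.1, h.1, add_comm x y ▸ h.2.2⟩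
  · rintro ⟨hne, h⟩; exact ⟨hne, Or.inl h⟩

lemma urep_unique {A : Set (Fin r → ZMod 2)} {d x y x' y' : Fin r → ZMod 2}
    (hd : d ∈ urep A)
    (hx : x ∈ A) (hy : y ∈ A) (hxy : x + y = d)
    (hx' : x' ∈ A) (hy' : y' ∈ A) (hxy' : x' + y' = d) :
    (x = x' ∧ y = y') ∨ (x = y' ∧ y = x') := by
  obtain ⟨a₁, ha₁, a₂, ha₂, -, hu⟩ := hd
  rcases hu x hx y hy hxy with ⟨rfl, rfl⟩ | ⟨rfl, rfl⟩ <;>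
    rcases hu x' hx' y' hy' hxy' with ⟨rfl, rfl⟩ | ⟨rfl, rfl⟩ <;> tauto

lemma step1 {A : Set (Fin r → ZMod 2)}
    (hround : ∀ B : Set (Fin r → ZMod 2), B ⊂ A → B + B ≠ A + A)
    {a : Fin r → ZMod 2} (ha : a ∈ A) (hb : ∃ b ∈ A, b ≠ a) :
    ∃ a', (gam A).Adj a a' := by
  set B := A \ {a} with hB
  have hBA : B ⊂ A := by
    refine ⟨Set.diff_subset, fun hs => ?_⟩
    exact (hs ha).2 rfl
  have hne := hround B hBA
  have hsub : B + B ⊆ A + A := Set.add_subset_add Set.diff_subset Set.diff_subset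
  obtain ⟨d, hdA, hdB⟩ := Set.exists_of_ssubset (ssubset_of_subset_of_ne hsub hne)
  obtain ⟨x, hx, y, hy, hxy⟩ := Set.mem_add.mp hdA
  have key : ∀ u v : Fin r → ZMod 2, u ∈ A → v ∈ A → u + v = d → u = a ∨ v = a := by
    intro u v hu hv huv
    by_contra hc
    push_neg at hc
    have huB : u ∈ B := ⟨hu, hc.1⟩
    have hvB : v ∈ B := ⟨hv, hc.2⟩
    exact hdB (huv ▸ Set.add_mem_add huB hvB)
  obtain ⟨a', ha', haa'⟩ : ∃ a' ∈ A, a + a' = d := by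
    rcases key x y hx hy hxy with rfl | rfl
    · exact ⟨y, hy, hxy⟩
    · exact ⟨x, hx, by rwa [add_comm]⟩
  have ha'ne : a' ≠ a := by
    rintro rfl
    obtain ⟨b, hbA, hba⟩ := hb
    have hd0 : d = 0 := by rw [← haa', my_add_self]
    have hbB : b ∈ B := ⟨hbA, hba⟩
    have : b + b ∈ B + B := Set.add_mem_add hbB hbB
    rw [my_add_self] at this
    exact hdB (hd0 ▸ this)
  have hd_urep : d ∈ urep A := by
    refine ⟨a, ha, a', ha', haa', ?_⟩
    intro b₁ hb₁ b₂ hb₂ hbd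
    rcases key b₁ b₂ hb₁ hb₂ hbd with rfl | rfl
    · left
      have h1 : b₁ + b₂ = b₁ + a' := by rw [hbd, ← haa']
      exact ⟨rfl, add_left_cancel h1⟩
    · right
      have h1 : b₁ + b₂ = a' + b₂ := by rw [hbd, ← haa', add_comm]
      exact ⟨add_right_cancel h1, rfl⟩
  exact ⟨a', gam_adj.mpr ⟨fun h => ha'ne h.symm, ha, ha', haa' ▸ hd_urep⟩⟩

end AuxLemmas


/-- **Corollary.** Let `r ≥ 1` and let `A ⊆ G = Fin r → ZMod 2` be round. Then
`|A| ≤ |D(A)| + t`, where `t` is the matching number of `Γ(A)`. -/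
theorem stmt_16 (r : ℕ) (hr : 1 ≤ r) (A : Set (Fin r → ZMod 2))
    (hround : ∀ B : Set (Fin r → ZMod 2), B ⊂ A → B + B ≠ A + A) (t : ℕ)
    (ht : t = sSup {n : ℕ | ∃ M : Set (Sym2 (Fin r → ZMod 2)), M ⊆ (gam A).edgeSet ∧
      (∀ e ∈ M, ∀ f ∈ M, e ≠ f → ∀ v, v ∈ e → v ∉ f) ∧ M.ncard = n}) :
    A.ncard ≤ (urep A).ncard + t := by
  classical
  -- trivial case: A subsingleton
  by_cases hsub : A.Subsingleton
  · rcases hsub.eq_empty_or_singleton with rfl | ⟨a, rfl⟩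
    · simp
    · have h0 : (0 : Fin r → ZMod 2) ∈ urep {a} := by
        refine ⟨a, rfl, a, rfl, my_add_self a, ?_⟩
        intro b₁ hb₁ b₂ hb₂ _
        rw [Set.mem_singleton_iff] at hb₁ hb₂
        exact Or.inl ⟨hb₁, hb₂⟩
      have h1 : 0 < (urep ({a} : Set (Fin r → ZMod 2))).ncard :=
        (Set.ncard_pos (Set.toFinite _)).mpr ⟨0, h0⟩
      rw [Set.ncard_singleton]
      omega
  -- main case
  set S := {n : ℕ | ∃ M : Set (Sym2 (Fin r → ZMod 2)), M ⊆ (gam A).edgeSet ∧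
      (∀ e ∈ M, ∀ f ∈ M, e ≠ f → ∀ v, v ∈ e → v ∉ f) ∧ M.ncard = n} with hS
  have hS0 : 0 ∈ S := ⟨∅, by simp, by simp, by simp⟩
  have hSbdd : BddAbove S := by
    refine ⟨Nat.card (Sym2 (Fin r → ZMod 2)), fun n hn => ?_⟩
    obtain ⟨M, -, -, hMc⟩ := hn
    rw [← hMc, ← Set.ncard_univ]
    exact Set.ncard_le_ncard (Set.subset_univ M) Set.finite_univ
  have htS : t ∈ S := ht ▸ Nat.sSup_mem ⟨0, hS0⟩ hSbdd
  obtain ⟨M₀, hM₀E, hM₀m, hM₀c⟩ := htS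
  have hmax : ∀ n ∈ S, n ≤ t := fun n hn => ht ▸ le_csSup hSbdd hn
  rw [Set.not_subsingleton_iff] at hsub
  obtain ⟨u₀, hu₀, v₀, hv₀, huv₀⟩ := hsub
  have hnt : ∀ a ∈ A, ∃ b ∈ A, b ≠ a := by
    intro a ha
    by_cases h : u₀ = a
    · exact ⟨v₀, hv₀, h ▸ huv₀.symm⟩
    · exact ⟨u₀, hu₀, h⟩
  -- covered vertices
  set cov := fun v : (Fin r → ZMod 2) => ∃ e ∈ M₀, v ∈ e with hcov
  -- L1: neighbors of uncovered vertices are covered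
  have L1 : ∀ v v' : (Fin r → ZMod 2), ¬ cov v → (gam A).Adj v v' → cov v' := by
    intro v v' hncov hadj
    by_contra hncov'
    have heE : s(v, v') ∈ (gam A).edgeSet := hadj
    have heM : s(v, v') ∉ M₀ := fun h => hncov ⟨_, h, Sym2.mem_mk_left _ _⟩
    have hmem : ∀ w : (Fin r → ZMod 2), w ∈ s(v, v') → ¬ cov w := by
      intro w hw
      rcases Sym2.mem_iff.mp hw with rfl | rfl
      · exact hncov
      · exact hncov'
    have hins : (t + 1) ∈ S := by
      refine ⟨insert s(v, v') M₀, Set.insert_subset heE hM₀E, ?_, ?_⟩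
      · rintro e₁ (rfl | he₁) e₂ (rfl | he₂) hne w hw₁ hw₂
        · exact hne rfl
        · exact hmem w hw₁ ⟨e₂, he₂, hw₂⟩
        · exact hmem w hw₂ ⟨e₁, he₁, hw₁⟩
        · exact hM₀m e₁ he₁ e₂ he₂ hne w hw₁ hw₂
      · rw [Set.ncard_insert_of_notMem heM (Set.toFinite _), hM₀c]
    exact absurd (hmax _ hins) (by omega)
  -- choice of a representative endpoint per matching edge
  set wfun := fun e : Sym2 (Fin r → ZMod 2) => (Quot.out e).1 with hwfun
  set W := wfun '' M₀ with hW
  -- partner function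
  have hex : ∀ v : (Fin r → ZMod 2), ∃ p : (Fin r → ZMod 2), v ∈ A →
      p ∈ A ∧ v + p ∈ urep A ∧ v ≠ p ∧
      ((∃ e ∈ M₀, e = s(v, p)) ∨ (¬ cov v ∧ cov p)) := by
    intro v
    by_cases hvA : v ∈ A
    · by_cases hcv : cov v
      · obtain ⟨e, heM, hve⟩ := hcv
        refine ⟨Sym2.Mem.other' hve, fun _ => ?_⟩
        have hse : s(v, Sym2.Mem.other' hve) = e := Sym2.other_spec' hve
        have hadj : (gam A).Adj v (Sym2.Mem.other' hve) := by
          rw [← SimpleGraph.mem_edgeSet, hse]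
          exact hM₀E heM
        obtain ⟨hne, -, hpA, hurep⟩ := gam_adj.mp hadj
        exact ⟨hpA, hurep, hne, Or.inl ⟨e, heM, hse.symm⟩⟩
      · obtain ⟨a', hadj⟩ := step1 hround hvA (hnt v hvA)
        obtain ⟨hne, -, hpA, hurep⟩ := gam_adj.mp hadj
        exact ⟨a', fun _ => ⟨hpA, hurep, hne, Or.inr ⟨hcv, L1 v a' hcv hadj⟩⟩⟩
    · exact ⟨0, fun h => absurd h hvA⟩
  choose p hp using hex
  -- the injection
  have hmaps : ∀ v ∈ A \ W, v + p v ∈ urep A := fun v hv => (hp v hv.1).2.1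
  have hinj : Set.InjOn (fun v => v + p v) (A \ W) := by
    intro v₁ hv₁ v₂ hv₂ heq
    by_contra hne12
    obtain ⟨hp₁A, hu₁, hne₁, hbr₁⟩ := hp v₁ hv₁.1
    obtain ⟨hp₂A, hu₂, hne₂, hbr₂⟩ := hp v₂ hv₂.1
    have := urep_unique hu₂ hv₁.1 hp₁A heq hv₂.1 hp₂A rfl
    rcases this with ⟨h1, -⟩ | ⟨h1, h2⟩
    · exact hne12 h1
    -- h1 : v₁ = p v₂, h2 : p v₁ = v₂
    rcases hbr₁ with ⟨e₁, he₁M, he₁⟩ | ⟨hncov₁, hcovp₁⟩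
    · rcases hbr₂ with ⟨e₂, he₂M, he₂⟩ | ⟨hncov₂, hcovp₂⟩
      · -- both covered, edges both equal s(v₁, v₂): contradiction with W
        have he₁' : e₁ = s(v₁, v₂) := by rw [he₁, h2]
        have hwe : wfun e₁ ∈ e₁ := Sym2.out_fst_mem e₁
        have hwW : wfun e₁ ∈ W := Set.mem_image_of_mem _ he₁M
        rw [he₁'] at hwW
        rw [he₁', Sym2.mem_iff] at hwe
        rcases hwe with h | h
        · exact hv₁.2 (h ▸ hwW)
        · exact hv₂.2 (h ▸ hwW)
      · -- v₂ uncovered but v₂ = p v₁ ∈ e₁ ∈ M₀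
        exact hncov₂ ⟨e₁, he₁M, by rw [he₁, ← h2]; exact Sym2.mem_mk_right _ _⟩
    · -- v₁ uncovered but p v₂ = v₁ is covered... cases on hbr₂
      rcases hbr₂ with ⟨e₂, he₂M, he₂⟩ | ⟨hncov₂, hcovp₂⟩
      · exact hncov₁ ⟨e₂, he₂M, by rw [he₂, ← h1]; exact Sym2.mem_mk_right _ _⟩
      · exact hncov₁ (h1 ▸ hcovp₂)
  -- counting
  have h1 : (A \ W).ncard ≤ (urep A).ncard :=
    Set.ncard_le_ncard_of_injOn _ hmaps hinj (Set.toFinite _)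
  have h2 : W.ncard ≤ t := by
    rw [← hM₀c]
    exact Set.ncard_image_le (Set.toFinite _)
  have h3 : A.ncard ≤ (A \ W).ncard + W.ncard :=
    Set.ncard_le_ncard_diff_add_ncard A W (Set.toFinite _)
  omega
end

section
/- Let r ≥ 1 be an integer. If S ⊆ G is a non-empty sum-free subset of the elementary abelian 2-group G of rank r and g ∈ G, then 0 ∉ S and the set g + (S ∪ {0}) is round. -/
open Pointwise Set

/-!
Translating `A` by `g` translates `A + A` by `g + g`, so roundness is invariant under translation
in any abelian group and it suffices to show that `S ∪ {0}` is round. If `C ⊆ S ∪ {0}` and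
`C + C = (S ∪ {0}) + (S ∪ {0}) ⊇ S`, then each `t ∈ S` is a sum of two elements of `C`, and
sum-freeness forces one of them to be `0`, so `t ∈ C`. Moreover `0 ∈ C`: otherwise `C = S` and
any `s ∈ S` would be `s + 0 ∈ S + S`.
-/

def IsRound {G : Type*} [Add G] (A : Set G) : Prop :=
  ∀ B ⊂ A, B + B ≠ A + A

section SumFree

variable {G : Type*} [AddZeroClass G] {S : Set G}

theorem zero_notMem_of_disjoint_add_self (hS : Disjoint S (S + S)) : (0 : G) ∉ S :=
  fun h0 => disjoint_left.1 hS h0 (by simpa using add_mem_add h0 h0)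

theorem subset_of_subset_union_zero_of_subset_add_self (hS : Disjoint S (S + S)) {C : Set G}
    (hC : C ⊆ S ∪ {0}) (hCC : S ⊆ C + C) : S ⊆ C := by
  intro t ht
  obtain ⟨c₁, hc₁, c₂, hc₂, rfl : c₁ + c₂ = t⟩ := hCC ht
  rcases hC hc₁ with h₁ | rfl <;> rcases hC hc₂ with h₂ | rfl
  · exact absurd (add_mem_add h₁ h₂) (disjoint_left.1 hS ht)
  · rwa [add_zero]
  · rwa [zero_add]
  · exact absurd (by rwa [add_zero] at ht) (zero_notMem_of_disjoint_add_self hS)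

theorem isRound_union_zero (hne : S.Nonempty) (hS : Disjoint S (S + S)) : IsRound (S ∪ {0}) := by
  intro C hC hCC
  have hS_sub : S ⊆ C + C :=
    hCC ▸ subset_union_left.trans (subset_add_left _ (mem_union_right _ rfl))
  have hSC := subset_of_subset_union_zero_of_subset_add_self hS hC.1 hS_sub
  have h0C : (0 : G) ∈ C := by
    by_contra h0
    have hCS : C ⊆ S := fun c hc => (hC.1 hc).resolve_right (by rintro rfl; exact h0 hc)
    obtain ⟨s, hs⟩ := hne
    exact disjoint_left.1 hS hs (add_subset_add hCS hCS (hS_sub hs))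
  exact hC.ne (subset_antisymm hC.1 (union_subset hSC (singleton_subset_iff.2 h0C)))

end SumFree

theorem IsRound.vadd {G : Type*} [AddCommGroup G] {A : Set G} (hA : IsRound A) (g : G) :
    IsRound (g +ᵥ A) := by
  intro B hB hBB
  refine hA (-g +ᵥ B) ?_ ?_
  · rw [← vadd_neg_vadd g B, ssubset_iff_subset_ne, vadd_set_subset_vadd_set_iff, Ne,
      vadd_left_cancel_iff] at hB
    exact ssubset_iff_subset_ne.2 hB
  · rw [vadd_add_vadd, hBB, vadd_add_vadd, vadd_vadd, ← neg_add, neg_add_cancel, zero_vadd]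

theorem stmt_19_general (r : ℕ) (S : Set (Fin r → ZMod 2)) (hSne : S.Nonempty)
    (hsf : S ∩ (S + S) = ∅) (g : Fin r → ZMod 2) :
    0 ∉ S ∧
    ∀ B : Set (Fin r → ZMod 2), B ⊂ (fun x => g + x) '' (S ∪ {0}) →
      B + B ≠ ((fun x => g + x) '' (S ∪ {0})) + ((fun x => g + x) '' (S ∪ {0})) := by
  rw [← disjoint_iff_inter_eq_empty] at hsf
  exact ⟨zero_notMem_of_disjoint_add_self hsf, (isRound_union_zero hSne hsf).vadd g⟩

/-- **Observation.** Let `r ≥ 1`. If `S ⊆ G = Fin r → ZMod 2` is non-empty and sum-free and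
`g ∈ G`, then `0 ∉ S` and the set `g + (S ∪ {0})` is round. -/
theorem stmt_19 (r : ℕ) (hr : 1 ≤ r) (S : Set (Fin r → ZMod 2)) (hSne : S.Nonempty)
    (hsf : S ∩ (S + S) = ∅) (g : Fin r → ZMod 2) :
    0 ∉ S ∧
    ∀ B : Set (Fin r → ZMod 2), B ⊂ (fun x => g + x) '' (S ∪ {0}) →
      B + B ≠ ((fun x => g + x) '' (S ∪ {0})) + ((fun x => g + x) '' (S ∪ {0})) :=
  stmt_19_general r S hSne hsf g
end
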